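/- arXiv:1803.06267 — 3 statements merged into one kernel-verified Lean document; each statement's English description precedes it below -/
import Mathlib

section
/- Let L = L_1 ∪ L_2 ∪ L_3 ∪ L_4 be a 3-consistent colored set of lines in R^3 with no colorful incidence. If all lines of one color class are contained in a single plane, then all lines of L are contained in that plane. -/
def IsLine (L : Set (Fin 3 → ℝ)) : Prop :=
  ∃ a v : Fin 3 → ℝ, v ≠ 0 ∧ L = {x | ∃ t : ℝ, x = a + t • v}

def Consistent3 (L : Fin 4 → Set (Set (Fin 3 → ℝ))) : Prop :=
  ∀ S : Finset (Fin 4), S.card = 3 → ∀ i ∈ S, ∀ ℓ ∈ L i,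
    ∃ p ∈ ℓ, ∀ j ∈ S, ∃ ℓ' ∈ L j, p ∈ ℓ'

def HasColorfulIncidence (L : Fin 4 → Set (Set (Fin 3 → ℝ))) : Prop :=
  ∃ p : Fin 3 → ℝ, ∀ j, ∃ ℓ ∈ L j, p ∈ ℓ

lemma aux_two (j i₀ : Fin 4) (h : j ≠ i₀) :
    ∃ k₁ k₂ : Fin 4, k₁ ≠ k₂ ∧ k₁ ≠ j ∧ k₁ ≠ i₀ ∧ k₂ ≠ j ∧ k₂ ≠ i₀ ∧
      ∀ m : Fin 4, m = j ∨ m = i₀ ∨ m = k₁ ∨ m = k₂ := by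
  revert h; revert j i₀; decide

/-- If, in a 3-consistent 4-colored set of lines in ℝ³ with no colorful
incidence, all lines of one color class lie in a plane {x | n·x = c}, then all lines of
the configuration lie in that plane. -/
theorem stmt5 (L : Fin 4 → Set (Set (Fin 3 → ℝ)))
    (hline : ∀ i, ∀ ℓ ∈ L i, IsLine ℓ)
    (hcons : Consistent3 L)
    (hnocolor : ¬ HasColorfulIncidence L)
    (i₀ : Fin 4) (n : Fin 3 → ℝ) (c : ℝ) (hn : n ≠ 0)
    (hplane : ∀ ℓ ∈ L i₀, ∀ x ∈ ℓ, ∑ t, n t * x t = c) :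
    ∀ j, ∀ ℓ ∈ L j, ∀ x ∈ ℓ, ∑ t, n t * x t = c := by
  intro j ℓ hℓ x hx
  by_cases hji : j = i₀
  · exact hplane ℓ (hji ▸ hℓ) x hx
  obtain ⟨k₁, k₂, h12, h1j, h1i, h2j, h2i, hcover⟩ := aux_two j i₀ hji
  set S₁ : Finset (Fin 4) := {j, i₀, k₁} with hS₁def
  set S₂ : Finset (Fin 4) := {j, i₀, k₂} with hS₂def
  have hS₁ : S₁.card = 3 :=
    Finset.card_eq_three.mpr ⟨j, i₀, k₁, hji, Ne.symm h1j, Ne.symm h1i, rfl⟩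
  have hS₂ : S₂.card = 3 :=
    Finset.card_eq_three.mpr ⟨j, i₀, k₂, hji, Ne.symm h2j, Ne.symm h2i, rfl⟩
  have hjS₁ : j ∈ S₁ := by simp [hS₁def]
  have hjS₂ : j ∈ S₂ := by simp [hS₂def]
  obtain ⟨p₁, hp₁ℓ, hp₁⟩ := hcons S₁ hS₁ j hjS₁ ℓ hℓ
  obtain ⟨p₂, hp₂ℓ, hp₂⟩ := hcons S₂ hS₂ j hjS₂ ℓ hℓ
  have hp₁plane : ∑ t, n t * p₁ t = c := by
    obtain ⟨ℓ', hℓ', hmem⟩ := hp₁ i₀ (by simp [hS₁def])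
    exact hplane ℓ' hℓ' p₁ hmem
  have hp₂plane : ∑ t, n t * p₂ t = c := by
    obtain ⟨ℓ', hℓ', hmem⟩ := hp₂ i₀ (by simp [hS₂def])
    exact hplane ℓ' hℓ' p₂ hmem
  have hne : p₁ ≠ p₂ := by
    intro h
    apply hnocolor
    refine ⟨p₁, fun m => ?_⟩
    rcases hcover m with rfl | rfl | rfl | rfl
    · exact hp₁ m hjS₁
    · exact hp₁ m (by simp [hS₁def])
    · exact hp₁ m (by simp [hS₁def])
    · exact h ▸ hp₂ m (by simp [hS₂def])
  obtain ⟨a, v, hv, rfl⟩ := hline j ℓ hℓ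
  obtain ⟨t₁, rfl⟩ := hp₁ℓ
  obtain ⟨t₂, rfl⟩ := hp₂ℓ
  obtain ⟨s, rfl⟩ := hx
  have key : ∀ r : ℝ, ∑ t, n t * (a + r • v) t
      = (∑ t, n t * a t) + r * ∑ t, n t * v t := by
    intro r
    rw [Finset.mul_sum]
    rw [← Finset.sum_add_distrib]
    apply Finset.sum_congr rfl
    intro t _
    simp [mul_add]
    ring
  rw [key] at hp₁plane hp₂plane ⊢
  have ht : t₁ ≠ t₂ := by
    intro h; exact hne (by rw [h])
  have hB : (∑ t, n t * v t) = 0 := by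
    have : (t₁ - t₂) * ∑ t, n t * v t = 0 := by linarith
    rcases mul_eq_zero.mp this with h | h
    · exact absurd (by linarith : t₁ = t₂) ht
    · exact h
  rw [hB] at hp₁plane ⊢
  linarith
end

section
/- Let L = L_1 ∪ L_2 ∪ L_3 ∪ L_4 be a 3-consistent colored set of lines in R^3 with no colorful incidence, not contained in a 2-plane, and with |L_i| = 3 for each i. Then for any two distinct color classes L_i and L_j: every line of L_i intersects exactly two lines of L_j, and for any two lines of L_j there is exactly one line of L_i intersecting both. -/
namespace Stmt6

def dp (u v : Fin 3 → ℝ) : ℝ := u 0 * v 0 + u 1 * v 1 + u 2 * v 2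

def cr (u v : Fin 3 → ℝ) : Fin 3 → ℝ :=
  ![u 1 * v 2 - u 2 * v 1, u 2 * v 0 - u 0 * v 2, u 0 * v 1 - u 1 * v 0]

lemma fin3_ne_zero {v : Fin 3 → ℝ} (h : v ≠ 0) : v 0 ≠ 0 ∨ v 1 ≠ 0 ∨ v 2 ≠ 0 := by
  by_contra hc
  push_neg at hc
  exact h (funext fun i => by fin_cases i <;> simp [hc.1, hc.2.1, hc.2.2])

lemma cr_eq_zero_dep {u v : Fin 3 → ℝ} (hu : u ≠ 0) (h : cr u v = 0) :
    ∃ t : ℝ, v = t • u := by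
  have h0 := congrFun h 0
  have h1 := congrFun h 1
  have h2 := congrFun h 2
  simp [cr] at h0 h1 h2
  rcases fin3_ne_zero hu with hn | hn | hn
  · refine ⟨v 0 / u 0, funext fun i => ?_⟩
    fin_cases i <;> simp [Pi.smul_apply, smul_eq_mul] <;> field_simp <;> linarith [h0, h1, h2, mul_comm (u 0) (v 1), mul_comm (u 0) (v 2)]
  · refine ⟨v 1 / u 1, funext fun i => ?_⟩
    fin_cases i <;> simp [Pi.smul_apply, smul_eq_mul] <;> field_simp <;> linarith [h0, h1, h2]
  · refine ⟨v 2 / u 2, funext fun i => ?_⟩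
    fin_cases i <;> simp [Pi.smul_apply, smul_eq_mul] <;> field_simp <;> linarith [h0, h1, h2]

lemma orth_two_dep {u v x : Fin 3 → ℝ} (hc : cr u v ≠ 0)
    (hxu : dp x u = 0) (hxv : dp x v = 0) : ∃ t : ℝ, x = t • cr u v := by
  have h0 : cr (cr u v) x = 0 := by
    funext i
    have e : cr (cr u v) x i = v i * dp x u - u i * dp x v := by
      fin_cases i <;> (simp [cr, dp]; ring)
    rw [e, hxu, hxv]; simp
  exact cr_eq_zero_dep hc h0

/-! ### Lines -/

def LineThru (x y : Fin 3 → ℝ) : Set (Fin 3 → ℝ) := {p | ∃ t : ℝ, p = x + t • (y - x)}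

lemma left_mem_lineThru (x y : Fin 3 → ℝ) : x ∈ LineThru x y := ⟨0, by simp⟩

lemma right_mem_lineThru (x y : Fin 3 → ℝ) : y ∈ LineThru x y := ⟨1, by simp⟩

lemma isLine_lineThru {x y : Fin 3 → ℝ} (h : x ≠ y) : IsLine (LineThru x y) :=
  ⟨x, y - x, fun hc => h (by have := sub_eq_zero.mp hc; exact this.symm), rfl⟩

lemma line_repr {ℓ : Set (Fin 3 → ℝ)} (hl : IsLine ℓ) {x y : Fin 3 → ℝ}
    (hx : x ∈ ℓ) (hy : y ∈ ℓ) (hxy : x ≠ y) : ℓ = LineThru x y := by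
  obtain ⟨a, v, hv, rfl⟩ := hl
  obtain ⟨s, rfl⟩ := hx
  obtain ⟨u, rfl⟩ := hy
  have hsu : u - s ≠ 0 := by
    intro hc
    apply hxy
    have : u = s := by linarith [sub_eq_zero.mp hc]
    rw [this]
  ext p
  constructor
  · rintro ⟨t, rfl⟩
    refine ⟨(t - s) / (u - s), ?_⟩
    have h2 : (a + u • v) - (a + s • v) = (u - s) • v := by
      simp [sub_smul]
      all_goals abel
    rw [h2, smul_smul, div_mul_cancel₀ _ hsu]
    all_goals module
  · rintro ⟨t, rfl⟩
    refine ⟨s + t * (u - s), ?_⟩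
    have h2 : (a + u • v) - (a + s • v) = (u - s) • v := by
      simp [sub_smul]
      all_goals abel
    rw [h2, smul_smul, add_smul]
    all_goals module

/-- two distinct points on two lines force the lines equal -/
lemma line_eq_of_two {ℓ ℓ' : Set (Fin 3 → ℝ)} (hl : IsLine ℓ) (hl' : IsLine ℓ')
    {x y : Fin 3 → ℝ} (hxy : x ≠ y) (hx : x ∈ ℓ) (hy : y ∈ ℓ) (hx' : x ∈ ℓ') (hy' : y ∈ ℓ') :
    ℓ = ℓ' := by
  rw [line_repr hl hx hy hxy, line_repr hl' hx' hy' hxy]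

/-- distinct lines meet in at most one point -/
lemma inter_unique {ℓ ℓ' : Set (Fin 3 → ℝ)} (hl : IsLine ℓ) (hl' : IsLine ℓ')
    (hne : ℓ ≠ ℓ') {x y : Fin 3 → ℝ} (hx : x ∈ ℓ) (hx' : x ∈ ℓ') (hy : y ∈ ℓ) (hy' : y ∈ ℓ') :
    x = y := by
  by_contra hxy
  exact hne (line_eq_of_two hl hl' hxy hx hy hx' hy')

/-! ### Planes -/

def Pl (n : Fin 3 → ℝ) (c : ℝ) : Set (Fin 3 → ℝ) := {x | dp n x = c}

lemma dp_add (n x y : Fin 3 → ℝ) : dp n (x + y) = dp n x + dp n y := by simp [dp]; ring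
lemma dp_sub (n x y : Fin 3 → ℝ) : dp n (x - y) = dp n x - dp n y := by simp [dp]; ring
lemma dp_smul (n : Fin 3 → ℝ) (t : ℝ) (x : Fin 3 → ℝ) : dp n (t • x) = t * dp n x := by
  simp [dp]; ring

/-- a line with two distinct points in a plane lies in the plane -/
lemma line_sub_plane {ℓ : Set (Fin 3 → ℝ)} (hl : IsLine ℓ) {x y : Fin 3 → ℝ}
    (hxy : x ≠ y) (hx : x ∈ ℓ) (hy : y ∈ ℓ) {n : Fin 3 → ℝ} {c : ℝ}
    (hxp : x ∈ Pl n c) (hyp : y ∈ Pl n c) : ℓ ⊆ Pl n c := by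
  have hxp' : dp n x = c := hxp
  have hyp' : dp n y = c := hyp
  rw [line_repr hl hx hy hxy]
  rintro p ⟨t, rfl⟩
  show dp n (x + t • (y - x)) = c
  rw [dp_add, dp_smul, dp_sub, hxp', hyp']
  ring

/-- plane through two distinct intersecting lines -/
lemma plane_of_two_lines {ℓ ℓ' : Set (Fin 3 → ℝ)} (hl : IsLine ℓ) (hl' : IsLine ℓ')
    (hne : ℓ ≠ ℓ') {p : Fin 3 → ℝ} (hp : p ∈ ℓ) (hp' : p ∈ ℓ') :
    ∃ n c, n ≠ 0 ∧ ℓ ⊆ Pl n c ∧ ℓ' ⊆ Pl n c := by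
  obtain ⟨a, v, hv, rfl⟩ := hl
  obtain ⟨a', w, hw, rfl⟩ := hl'
  -- p = a + s v = a' + u w
  obtain ⟨s, hs⟩ := hp
  obtain ⟨u, hu⟩ := hp'
  refine ⟨cr v w, dp (cr v w) p, ?_, ?_, ?_⟩
  · intro hc
    obtain ⟨t, ht⟩ := cr_eq_zero_dep hv hc
    -- w = t v, t ≠ 0 since w ≠ 0; then the two lines are equal
    have ht0 : t ≠ 0 := by rintro rfl; simp at ht; exact hw ht
    apply hne
    have h1 : a ∈ {x | ∃ t : ℝ, x = a + t • v} := ⟨0, by simp⟩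
    have h2 : a + v ∈ {x | ∃ t : ℝ, x = a + t • v} := ⟨1, by simp⟩
    rw [hs] at hu
    have key : a' = a + s • v - u • w := by
      rw [eq_sub_iff_add_eq]; exact hu.symm
    have h1' : a ∈ {x | ∃ r : ℝ, x = a' + r • w} := by
      refine ⟨u + (-s)/t, ?_⟩
      have hsc : (u + (-s)/t) * t = u * t - s := by
        field_simp
        all_goals ring
      rw [key, ht]
      simp only [smul_smul]
      rw [hsc]
      module
    have h2' : a + v ∈ {x | ∃ r : ℝ, x = a' + r • w} := by
      refine ⟨u + (1-s)/t, ?_⟩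
      have hsc : (u + (1-s)/t) * t = u * t + (1 - s) := by
        field_simp
        all_goals ring
      rw [key, ht]
      simp only [smul_smul]
      rw [hsc]
      module
    have hav : a ≠ a + v := by
      intro hc2
      exact hv (by have := congrArg (· - a) hc2; simpa using this.symm)
    exact line_eq_of_two ⟨a, v, hv, rfl⟩ ⟨a', w, hw, rfl⟩ hav h1 h2 h1' h2'
  · rintro x ⟨t, rfl⟩
    show dp (cr v w) (a + t • v) = dp (cr v w) p
    rw [hs]
    rw [dp_add, dp_add, dp_smul, dp_smul]
    have hz : dp (cr v w) v = 0 := by simp [cr, dp]; ring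
    rw [hz]; ring
  · rintro x ⟨t, rfl⟩
    show dp (cr v w) (a' + t • w) = dp (cr v w) p
    rw [hu]
    rw [dp_add, dp_add, dp_smul, dp_smul]
    have hz : dp (cr v w) w = 0 := by simp [cr, dp]; ring
    rw [hz]; ring

/-- plane through a line and a point outside it -/
lemma plane_of_line_pt {ℓ : Set (Fin 3 → ℝ)} (hl : IsLine ℓ) {p : Fin 3 → ℝ}
    (hp : p ∉ ℓ) : ∃ n c, n ≠ 0 ∧ ℓ ⊆ Pl n c ∧ p ∈ Pl n c := by
  obtain ⟨a, v, hv, rfl⟩ := hl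
  refine ⟨cr v (p - a), dp (cr v (p-a)) a, ?_, ?_, ?_⟩
  · intro hc
    obtain ⟨t, ht⟩ := cr_eq_zero_dep hv hc
    exact hp ⟨t, by rw [← ht]; abel⟩
  · rintro x ⟨t, rfl⟩
    show dp _ (a + t • v) = dp _ a
    rw [dp_add, dp_smul]
    have : dp (cr v (p - a)) v = 0 := by simp [cr, dp]; ring
    rw [this]; ring
  · show dp _ p = dp _ a
    have h1 : dp (cr v (p-a)) (p - a) = 0 := by simp [cr, dp]; ring
    rw [dp_sub] at h1; linarith

/-- three points in the intersection of two distinct planes are collinear -/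
lemma dp_comm (u v : Fin 3 → ℝ) : dp u v = dp v u := by simp [dp]; ring

lemma planes_inter_collinear {n m : Fin 3 → ℝ} {c d : ℝ} (hn : n ≠ 0) (hm : m ≠ 0)
    (hne : Pl n c ≠ Pl m d) {x y z : Fin 3 → ℝ} (hxy : x ≠ y)
    (hx : x ∈ Pl n c) (hy : y ∈ Pl n c) (hz : z ∈ Pl n c)
    (hx' : x ∈ Pl m d) (hy' : y ∈ Pl m d) (hz' : z ∈ Pl m d) :
    z ∈ LineThru x y := by
  have hx1 : dp n x = c := hx
  have hy1 : dp n y = c := hy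
  have hz1 : dp n z = c := hz
  have hx2 : dp m x = d := hx'
  have hy2 : dp m y = d := hy'
  have hz2 : dp m z = d := hz'
  have hcr : cr n m ≠ 0 := by
    intro hc
    obtain ⟨t, ht⟩ := cr_eq_zero_dep hn hc
    apply hne
    have ht0 : t ≠ 0 := by rintro rfl; simp at ht; exact hm ht
    have hdc : d = t * c := by
      have : dp m x = t * dp n x := by rw [ht, dp]; simp [dp]; ring
      rw [hx1] at this; rw [← hx2, this]
    ext w
    constructor
    · intro hw
      have hw1 : dp n w = c := hw
      show dp m w = d
      rw [ht, hdc]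
      have : dp (t • n) w = t * dp n w := by simp [dp]; ring
      rw [this, hw1]
    · intro hw
      have hw1 : dp m w = d := hw
      show dp n w = c
      rw [ht] at hw1
      have he : dp (t • n) w = t * dp n w := by simp [dp]; ring
      rw [he, hdc] at hw1
      exact mul_left_cancel₀ ht0 hw1
  have hu1 : dp (y - x) n = 0 := by rw [dp_comm, dp_sub, hx1, hy1]; ring
  have hu2 : dp (y - x) m = 0 := by rw [dp_comm, dp_sub, hx2, hy2]; ring
  have hw1 : dp (z - x) n = 0 := by rw [dp_comm, dp_sub, hx1, hz1]; ring
  have hw2 : dp (z - x) m = 0 := by rw [dp_comm, dp_sub, hx2, hz2]; ring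
  obtain ⟨s, hs⟩ := orth_two_dep hcr hu1 hu2
  obtain ⟨r, hr⟩ := orth_two_dep hcr hw1 hw2
  have hs0 : s ≠ 0 := by
    rintro rfl
    have h0 : y - x = 0 := by rw [hs]; simp
    exact hxy (sub_eq_zero.mp h0).symm
  refine ⟨r / s, ?_⟩
  have hzz : z - x = (r / s) • (y - x) := by
    rw [hs, hr, smul_smul, div_mul_cancel₀ _ hs0]
  rw [← hzz]; abel

end Stmt6
namespace Stmt6

def On (X : Set (Set (Fin 3 → ℝ))) (p : Fin 3 → ℝ) : Prop := ∃ ℓ ∈ X, p ∈ ℓ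

def Tri (X Y Z : Set (Set (Fin 3 → ℝ))) : Prop :=
  ∀ ℓ ∈ X, ∃ p ∈ ℓ, On Y p ∧ On Z p

structure Cfg (A B C D : Set (Set (Fin 3 → ℝ))) : Prop where
  lineA : ∀ ℓ ∈ A, IsLine ℓ
  lineB : ∀ ℓ ∈ B, IsLine ℓ
  lineC : ∀ ℓ ∈ C, IsLine ℓ
  lineD : ∀ ℓ ∈ D, IsLine ℓ
  cardA : A.ncard = 3
  cardB : B.ncard = 3
  cardC : C.ncard = 3
  cardD : D.ncard = 3
  dAB : ∀ ℓ, ℓ ∈ A → ℓ ∈ B → False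
  dAC : ∀ ℓ, ℓ ∈ A → ℓ ∈ C → False
  dAD : ∀ ℓ, ℓ ∈ A → ℓ ∈ D → False
  dBC : ∀ ℓ, ℓ ∈ B → ℓ ∈ C → False
  dBD : ∀ ℓ, ℓ ∈ B → ℓ ∈ D → False
  dCD : ∀ ℓ, ℓ ∈ C → ℓ ∈ D → False
  tA_BC : Tri A B C
  tA_BD : Tri A B D
  tA_CD : Tri A C D
  tB_AC : Tri B A C
  tB_AD : Tri B A D
  tB_CD : Tri B C D
  tC_AB : Tri C A B
  tC_AD : Tri C A D
  tC_BD : Tri C B D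
  tD_AB : Tri D A B
  tD_AC : Tri D A C
  tD_BC : Tri D B C
  nocol : ∀ p, On A p → On B p → On C p → On D p → False
  noplane : ∀ n c, n ≠ 0 → ¬ (∀ ℓ, ℓ ∈ A ∪ B ∪ C ∪ D → ℓ ⊆ Pl n c)

variable {A B C D : Set (Set (Fin 3 → ℝ))}

lemma Tri.swap {X Y Z : Set (Set (Fin 3 → ℝ))} (h : Tri X Y Z) : Tri X Z Y := by
  intro ℓ hℓ
  obtain ⟨p, hp, h1, h2⟩ := h ℓ hℓ
  exact ⟨p, hp, h2, h1⟩

lemma Cfg.swapCD (cfg : Cfg A B C D) : Cfg A B D C where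
  lineA := cfg.lineA
  lineB := cfg.lineB
  lineC := cfg.lineD
  lineD := cfg.lineC
  cardA := cfg.cardA
  cardB := cfg.cardB
  cardC := cfg.cardD
  cardD := cfg.cardC
  dAB := cfg.dAB
  dAC := cfg.dAD
  dAD := cfg.dAC
  dBC := cfg.dBD
  dBD := cfg.dBC
  dCD := fun ℓ h1 h2 => cfg.dCD ℓ h2 h1
  tA_BC := cfg.tA_BD
  tA_BD := cfg.tA_BC
  tA_CD := cfg.tA_CD.swap
  tB_AC := cfg.tB_AD
  tB_AD := cfg.tB_AC
  tB_CD := cfg.tB_CD.swap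
  tC_AB := cfg.tD_AB
  tC_AD := cfg.tD_AC
  tC_BD := fun ℓ hℓ => by
    obtain ⟨p, hp, h1, h2⟩ := cfg.tD_BC ℓ hℓ
    exact ⟨p, hp, h1, h2⟩
  tD_AB := cfg.tC_AB
  tD_AC := cfg.tC_AD
  tD_BC := fun ℓ hℓ => by
    obtain ⟨p, hp, h1, h2⟩ := cfg.tC_BD ℓ hℓ
    exact ⟨p, hp, h1, h2⟩
  nocol := fun p h1 h2 h3 h4 => cfg.nocol p h1 h2 h4 h3
  noplane := fun n c hn h => cfg.noplane n c hn (fun ℓ hm => h ℓ (by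
    simp only [Set.mem_union] at hm ⊢; tauto))

/-- enumeration of a 3-element set from three distinct members -/
lemma enum3 {α : Type*} {S : Set α} (h3 : S.ncard = 3) {x y z : α}
    (hx : x ∈ S) (hy : y ∈ S) (hz : z ∈ S)
    (hxy : x ≠ y) (hxz : x ≠ z) (hyz : y ≠ z) :
    ∀ w ∈ S, w = x ∨ w = y ∨ w = z := by
  have hsub : ({x, y, z} : Set α) ⊆ S := by
    intro w hw
    rcases hw with rfl | rfl | rfl <;> assumption
  have hfin : S.Finite := Set.finite_of_ncard_ne_zero (by omega)
  have hcard : ({x, y, z} : Set α).ncard = 3 :=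
    Set.ncard_eq_three.mpr ⟨x, y, z, hxy, hxz, hyz, rfl⟩
  have := Set.eq_of_subset_of_ncard_le hsub (by rw [h3, hcard]) hfin
  intro w hw
  rw [← this] at hw
  rcases hw with rfl | rfl | rfl
  · exact Or.inl rfl
  · exact Or.inr (Or.inl rfl)
  · exact Or.inr (Or.inr rfl)

/-- the third element of a 3-element set -/
lemma three_enum {α : Type*} {S : Set α} (h3 : S.ncard = 3) {x y : α}
    (hx : x ∈ S) (hy : y ∈ S) (hxy : x ≠ y) :
    ∃ z ∈ S, z ≠ x ∧ z ≠ y ∧ ∀ w ∈ S, w = x ∨ w = y ∨ w = z := by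
  obtain ⟨a, b, c, hab, hac, hbc, rfl⟩ := Set.ncard_eq_three.mp h3
  have hx' : x = a ∨ x = b ∨ x = c := by simpa using hx
  have hy' : y = a ∨ y = b ∨ y = c := by simpa using hy
  rcases hx' with rfl | rfl | rfl <;> rcases hy' with rfl | rfl | rfl
  · exact absurd rfl hxy
  · exact ⟨c, by simp, hac.symm, hbc.symm, enum3 h3 hx hy (by simp) hxy hac hbc⟩
  · exact ⟨b, by simp, hab.symm, hbc, enum3 h3 hx hy (by simp) hxy hab hbc.symm⟩
  · exact ⟨c, by simp, hbc.symm, hac.symm, enum3 h3 hx hy (by simp) hxy hbc hac⟩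
  · exact absurd rfl hxy
  · exact ⟨a, by simp, hab, hac, enum3 h3 hx hy (by simp) hxy hab.symm hac.symm⟩
  · exact ⟨b, by simp, hbc, hab.symm, enum3 h3 hx hy (by simp) hxy hbc.symm hab⟩
  · exact ⟨a, by simp, hac, hab, enum3 h3 hx hy (by simp) hxy hac.symm hab.symm⟩
  · exact absurd rfl hxy

namespace Cfg

/-- two distinct points of a line of A lying on B-lines, with extra colors -/
lemma bptsA (cfg : Cfg A B C D) {ℓ : Set (Fin 3 → ℝ)} (hℓ : ℓ ∈ A) :
    ∃ p1 p2, p1 ≠ p2 ∧ p1 ∈ ℓ ∧ p2 ∈ ℓ ∧ On B p1 ∧ On C p1 ∧ On B p2 ∧ On D p2 := by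
  obtain ⟨p1, hp1, hB1, hC1⟩ := cfg.tA_BC ℓ hℓ
  obtain ⟨p2, hp2, hB2, hD2⟩ := cfg.tA_BD ℓ hℓ
  refine ⟨p1, p2, ?_, hp1, hp2, hB1, hC1, hB2, hD2⟩
  rintro rfl
  exact cfg.nocol p1 ⟨ℓ, hℓ, hp1⟩ hB1 hC1 hD2

lemma bptsC (cfg : Cfg A B C D) {ℓ : Set (Fin 3 → ℝ)} (hℓ : ℓ ∈ C) :
    ∃ p1 p2, p1 ≠ p2 ∧ p1 ∈ ℓ ∧ p2 ∈ ℓ ∧ On A p1 ∧ On B p1 ∧ On B p2 ∧ On D p2 := by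
  obtain ⟨p1, hp1, hA1, hB1⟩ := cfg.tC_AB ℓ hℓ
  obtain ⟨p2, hp2, hB2, hD2⟩ := cfg.tC_BD ℓ hℓ
  refine ⟨p1, p2, ?_, hp1, hp2, hA1, hB1, hB2, hD2⟩
  rintro rfl
  exact cfg.nocol p1 hA1 hB1 ⟨ℓ, hℓ, hp1⟩ hD2

lemma bptsD (cfg : Cfg A B C D) {ℓ : Set (Fin 3 → ℝ)} (hℓ : ℓ ∈ D) :
    ∃ p1 p2, p1 ≠ p2 ∧ p1 ∈ ℓ ∧ p2 ∈ ℓ ∧ On A p1 ∧ On B p1 ∧ On B p2 ∧ On C p2 := by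
  obtain ⟨p1, hp1, hA1, hB1⟩ := cfg.tD_AB ℓ hℓ
  obtain ⟨p2, hp2, hB2, hC2⟩ := cfg.tD_BC ℓ hℓ
  refine ⟨p1, p2, ?_, hp1, hp2, hA1, hB1, hB2, hC2⟩
  rintro rfl
  exact cfg.nocol p1 hA1 hB1 hC2 ⟨ℓ, hℓ, hp1⟩

lemma bpts_other (cfg : Cfg A B C D) {ℓ : Set (Fin 3 → ℝ)} (hℓ : ℓ ∈ A ∨ ℓ ∈ C ∨ ℓ ∈ D) :
    ∃ p1 p2, p1 ≠ p2 ∧ p1 ∈ ℓ ∧ p2 ∈ ℓ ∧ On B p1 ∧ On B p2 := by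
  rcases hℓ with h | h | h
  · obtain ⟨p1, p2, h12, h1, h2, hB1, _, hB2, _⟩ := cfg.bptsA h
    exact ⟨p1, p2, h12, h1, h2, hB1, hB2⟩
  · obtain ⟨p1, p2, h12, h1, h2, _, hB1, hB2, _⟩ := cfg.bptsC h
    exact ⟨p1, p2, h12, h1, h2, hB1, hB2⟩
  · obtain ⟨p1, p2, h12, h1, h2, _, hB1, hB2, _⟩ := cfg.bptsD h
    exact ⟨p1, p2, h12, h1, h2, hB1, hB2⟩

lemma aptsB (cfg : Cfg A B C D) {m : Set (Fin 3 → ℝ)} (hm : m ∈ B) :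
    ∃ p1 p2, p1 ≠ p2 ∧ p1 ∈ m ∧ p2 ∈ m ∧ On A p1 ∧ On C p1 ∧ On A p2 ∧ On D p2 := by
  obtain ⟨p1, hp1, hA1, hC1⟩ := cfg.tB_AC m hm
  obtain ⟨p2, hp2, hA2, hD2⟩ := cfg.tB_AD m hm
  refine ⟨p1, p2, ?_, hp1, hp2, hA1, hC1, hA2, hD2⟩
  rintro rfl
  exact cfg.nocol p1 hA1 ⟨m, hm, hp1⟩ hC1 hD2

lemma aptsC (cfg : Cfg A B C D) {m : Set (Fin 3 → ℝ)} (hm : m ∈ C) :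
    ∃ p1 p2, p1 ≠ p2 ∧ p1 ∈ m ∧ p2 ∈ m ∧ On A p1 ∧ On B p1 ∧ On A p2 ∧ On D p2 := by
  obtain ⟨p1, hp1, hA1, hB1⟩ := cfg.tC_AB m hm
  obtain ⟨p2, hp2, hA2, hD2⟩ := cfg.tC_AD m hm
  refine ⟨p1, p2, ?_, hp1, hp2, hA1, hB1, hA2, hD2⟩
  rintro rfl
  exact cfg.nocol p1 hA1 hB1 ⟨m, hm, hp1⟩ hD2

lemma aptsD (cfg : Cfg A B C D) {m : Set (Fin 3 → ℝ)} (hm : m ∈ D) :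
    ∃ p1 p2, p1 ≠ p2 ∧ p1 ∈ m ∧ p2 ∈ m ∧ On A p1 ∧ On B p1 ∧ On A p2 ∧ On C p2 := by
  obtain ⟨p1, hp1, hA1, hB1⟩ := cfg.tD_AB m hm
  obtain ⟨p2, hp2, hA2, hC2⟩ := cfg.tD_AC m hm
  refine ⟨p1, p2, ?_, hp1, hp2, hA1, hB1, hA2, hC2⟩
  rintro rfl
  exact cfg.nocol p1 hA1 hB1 hC2 ⟨m, hm, hp1⟩

lemma cptsA (cfg : Cfg A B C D) {m : Set (Fin 3 → ℝ)} (hm : m ∈ A) :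
    ∃ p1 p2, p1 ≠ p2 ∧ p1 ∈ m ∧ p2 ∈ m ∧ On B p1 ∧ On C p1 ∧ On C p2 ∧ On D p2 := by
  obtain ⟨p1, hp1, hB1, hC1⟩ := cfg.tA_BC m hm
  obtain ⟨p2, hp2, hC2, hD2⟩ := cfg.tA_CD m hm
  refine ⟨p1, p2, ?_, hp1, hp2, hB1, hC1, hC2, hD2⟩
  rintro rfl
  exact cfg.nocol p1 ⟨m, hm, hp1⟩ hB1 hC1 hD2

lemma cptsB (cfg : Cfg A B C D) {m : Set (Fin 3 → ℝ)} (hm : m ∈ B) :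
    ∃ p1 p2, p1 ≠ p2 ∧ p1 ∈ m ∧ p2 ∈ m ∧ On A p1 ∧ On C p1 ∧ On C p2 ∧ On D p2 := by
  obtain ⟨p1, hp1, hA1, hC1⟩ := cfg.tB_AC m hm
  obtain ⟨p2, hp2, hC2, hD2⟩ := cfg.tB_CD m hm
  refine ⟨p1, p2, ?_, hp1, hp2, hA1, hC1, hC2, hD2⟩
  rintro rfl
  exact cfg.nocol p1 hA1 ⟨m, hm, hp1⟩ hC1 hD2

lemma cptsD (cfg : Cfg A B C D) {m : Set (Fin 3 → ℝ)} (hm : m ∈ D) :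
    ∃ p1 p2, p1 ≠ p2 ∧ p1 ∈ m ∧ p2 ∈ m ∧ On A p1 ∧ On C p1 ∧ On B p2 ∧ On C p2 := by
  obtain ⟨p1, hp1, hA1, hC1⟩ := cfg.tD_AC m hm
  obtain ⟨p2, hp2, hB2, hC2⟩ := cfg.tD_BC m hm
  refine ⟨p1, p2, ?_, hp1, hp2, hA1, hC1, hB2, hC2⟩
  rintro rfl
  exact cfg.nocol p1 hA1 hB2 hC1 ⟨m, hm, hp1⟩

/-- H2: the lines of B do not all lie in one plane -/
lemma B_not_coplanar (cfg : Cfg A B C D) {n : Fin 3 → ℝ} {c : ℝ} (hn : n ≠ 0) :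
    ¬ (∀ b ∈ B, b ⊆ Pl n c) := by
  intro hall
  apply cfg.noplane n c hn
  intro ℓ hℓ
  simp only [Set.mem_union] at hℓ
  rcases hℓ with ((hA | hB) | hC) | hD
  · obtain ⟨p1, p2, h12, h1, h2, ⟨b1, hb1, hp1b⟩, _, ⟨b2, hb2, hp2b⟩, _⟩ := cfg.bptsA hA
    exact line_sub_plane (cfg.lineA ℓ hA) h12 h1 h2 (hall b1 hb1 hp1b) (hall b2 hb2 hp2b)
  · exact hall ℓ hB
  · obtain ⟨p1, p2, h12, h1, h2, _, ⟨b1, hb1, hp1b⟩, ⟨b2, hb2, hp2b⟩, _⟩ := cfg.bptsC hC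
    exact line_sub_plane (cfg.lineC ℓ hC) h12 h1 h2 (hall b1 hb1 hp1b) (hall b2 hb2 hp2b)
  · obtain ⟨p1, p2, h12, h1, h2, _, ⟨b1, hb1, hp1b⟩, ⟨b2, hb2, hp2b⟩, _⟩ := cfg.bptsD hD
    exact line_sub_plane (cfg.lineD ℓ hD) h12 h1 h2 (hall b1 hb1 hp1b) (hall b2 hb2 hp2b)

lemma A_not_coplanar (cfg : Cfg A B C D) {n : Fin 3 → ℝ} {c : ℝ} (hn : n ≠ 0) :
    ¬ (∀ a ∈ A, a ⊆ Pl n c) := by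
  intro hall
  apply cfg.noplane n c hn
  intro ℓ hℓ
  simp only [Set.mem_union] at hℓ
  rcases hℓ with ((hA | hB) | hC) | hD
  · exact hall ℓ hA
  · obtain ⟨p1, p2, h12, h1, h2, ⟨a1, ha1, hp1⟩, _, ⟨a2, ha2, hp2⟩, _⟩ := cfg.aptsB hB
    exact line_sub_plane (cfg.lineB ℓ hB) h12 h1 h2 (hall a1 ha1 hp1) (hall a2 ha2 hp2)
  · obtain ⟨p1, p2, h12, h1, h2, ⟨a1, ha1, hp1⟩, _, ⟨a2, ha2, hp2⟩, _⟩ := cfg.aptsC hC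
    exact line_sub_plane (cfg.lineC ℓ hC) h12 h1 h2 (hall a1 ha1 hp1) (hall a2 ha2 hp2)
  · obtain ⟨p1, p2, h12, h1, h2, ⟨a1, ha1, hp1⟩, _, ⟨a2, ha2, hp2⟩, _⟩ := cfg.aptsD hD
    exact line_sub_plane (cfg.lineD ℓ hD) h12 h1 h2 (hall a1 ha1 hp1) (hall a2 ha2 hp2)

lemma C_not_coplanar (cfg : Cfg A B C D) {n : Fin 3 → ℝ} {c : ℝ} (hn : n ≠ 0) :
    ¬ (∀ m ∈ C, m ⊆ Pl n c) := by
  intro hall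
  apply cfg.noplane n c hn
  intro ℓ hℓ
  simp only [Set.mem_union] at hℓ
  rcases hℓ with ((hA | hB) | hC) | hD
  · obtain ⟨p1, p2, h12, h1, h2, _, ⟨c1, hc1, hp1⟩, ⟨c2, hc2, hp2⟩, _⟩ := cfg.cptsA hA
    exact line_sub_plane (cfg.lineA ℓ hA) h12 h1 h2 (hall c1 hc1 hp1) (hall c2 hc2 hp2)
  · obtain ⟨p1, p2, h12, h1, h2, _, ⟨c1, hc1, hp1⟩, ⟨c2, hc2, hp2⟩, _⟩ := cfg.cptsB hB
    exact line_sub_plane (cfg.lineB ℓ hB) h12 h1 h2 (hall c1 hc1 hp1) (hall c2 hc2 hp2)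
  · exact hall ℓ hC
  · obtain ⟨p1, p2, h12, h1, h2, _, ⟨c1, hc1, hp1⟩, _, ⟨c2, hc2, hp2⟩⟩ := cfg.cptsD hD
    exact line_sub_plane (cfg.lineD ℓ hD) h12 h1 h2 (hall c1 hc1 hp1) (hall c2 hc2 hp2)

end Cfg

end Stmt6
namespace Stmt6
namespace Cfg

variable {A B C D : Set (Set (Fin 3 → ℝ))}

/-- Stage 1 kill: a transversal a1, a C-or-D line through a point P of a1 meeting two
B-lines forces a coplanar triple (a1, bi, bj). -/
lemma pair_kill (cfg : Cfg A B C D) {a1 bi bj cs : Set (Fin 3 → ℝ)}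
    {P X Y qi qj : Fin 3 → ℝ}
    (ha1 : a1 ∈ A) (hbi : bi ∈ B) (hbj : bj ∈ B) (hcs : cs ∈ C ∨ cs ∈ D)
    (hPa : P ∈ a1) (hPc : P ∈ cs) (hPbi : P ∉ bi) (hPbj : P ∉ bj)
    (hXc : X ∈ cs) (hXbi : X ∈ bi) (hYc : Y ∈ cs) (hYbj : Y ∈ bj)
    (hqi : qi ∈ a1) (hqibi : qi ∈ bi) (hqj : qj ∈ a1) (hqjbj : qj ∈ bj) :
    ∃ n c, n ≠ 0 ∧ a1 ⊆ Pl n c ∧ bi ⊆ Pl n c ∧ bj ⊆ Pl n c := by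
  have la1 := cfg.lineA a1 ha1
  have lbi := cfg.lineB bi hbi
  have lbj := cfg.lineB bj hbj
  have lcs : IsLine cs := by
    rcases hcs with h | h
    · exact cfg.lineC cs h
    · exact cfg.lineD cs h
  have hne1 : a1 ≠ bi := by rintro rfl; exact cfg.dAB a1 ha1 hbi
  have hcsa1 : cs ≠ a1 := by
    rintro rfl
    rcases hcs with h | h
    · exact cfg.dAC cs ha1 h
    · exact cfg.dAD cs ha1 h
  obtain ⟨n, c, hn, hsub1, hsub2⟩ := plane_of_two_lines la1 lbi hne1 hqi hqibi
  have hPX : P ≠ X := fun h => hPbi (h ▸ hXbi)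
  have hcsub : cs ⊆ Pl n c :=
    line_sub_plane lcs hPX hPc hXc (hsub1 hPa) (hsub2 hXbi)
  by_cases hbjs : bj ⊆ Pl n c
  · exact ⟨n, c, hn, hsub1, hsub2, hbjs⟩
  · exfalso
    have hPY : P ≠ Y := fun h => hPbj (h ▸ hYbj)
    have hYqj : Y ≠ qj := by
      rintro rfl
      exact hcsa1 (line_eq_of_two lcs la1 hPY hPc hYc hPa hqj)
    exact hbjs (line_sub_plane lbj hYqj hYbj hqjbj (hcsub hYc) (hsub1 hqj))

/-- classification of a line of A∪C∪D not contained in the plane of B1, B2 -/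
lemma off_plane_line (cfg : Cfg A B C D) {B1 B2 B3 : Set (Fin 3 → ℝ)}
    (hB1 : B1 ∈ B) (hB2 : B2 ∈ B) (hB3 : B3 ∈ B)
    (h12 : B1 ≠ B2) (h13 : B1 ≠ B3) (h23 : B2 ≠ B3)
    {n : Fin 3 → ℝ} {c : ℝ} (hπ1 : B1 ⊆ Pl n c) (hπ2 : B2 ⊆ Pl n c)
    {ℓ : Set (Fin 3 → ℝ)} (hℓ : ℓ ∈ A ∨ ℓ ∈ C ∨ ℓ ∈ D) (hℓπ : ¬ ℓ ⊆ Pl n c) :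
    ∃ x z, x ∈ ℓ ∧ z ∈ ℓ ∧ x ≠ z ∧ (x ∈ B1 ∨ x ∈ B2) ∧ z ∈ B3 ∧ z ∉ Pl n c ∧
      (∀ p ∈ ℓ, p ∈ Pl n c → p = x) := by
  have lℓ : IsLine ℓ := by
    rcases hℓ with h | h | h
    · exact cfg.lineA ℓ h
    · exact cfg.lineC ℓ h
    · exact cfg.lineD ℓ h
  have hℓB3 : ℓ ≠ B3 := by
    rintro rfl
    rcases hℓ with h | h | h
    · exact cfg.dAB ℓ h hB3
    · exact cfg.dBC ℓ hB3 h
    · exact cfg.dBD ℓ hB3 h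
  have hBenum := enum3 cfg.cardB hB1 hB2 hB3 h12 h13 h23
  obtain ⟨p1, p2, h12', hp1, hp2, ⟨b1', hb1', hp1b⟩, ⟨b2', hb2', hp2b⟩⟩ :=
    cfg.bpts_other hℓ
  have hc1 := hBenum b1' hb1'
  have hc2 := hBenum b2' hb2'
  -- helper to finish given pt x in B1∪B2 and z on B3
  have finish : ∀ x z, x ∈ ℓ → z ∈ ℓ → x ≠ z → (x ∈ B1 ∨ x ∈ B2) → z ∈ B3 →
      ∃ x' z', x' ∈ ℓ ∧ z' ∈ ℓ ∧ x' ≠ z' ∧ (x' ∈ B1 ∨ x' ∈ B2) ∧ z' ∈ B3 ∧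
        z' ∉ Pl n c ∧ (∀ p ∈ ℓ, p ∈ Pl n c → p = x') := by
    intro x z hxl hzl hxz hxB hzB
    have hxπ : x ∈ Pl n c := by
      rcases hxB with h | h
      · exact hπ1 h
      · exact hπ2 h
    have huniq : ∀ p ∈ ℓ, p ∈ Pl n c → p = x := by
      intro p hpl hpπ
      by_contra hpx
      exact hℓπ (line_sub_plane lℓ hpx hpl hxl hpπ hxπ)
    have hzπ : z ∉ Pl n c := fun h => hxz ((huniq z hzl h).symm)
    exact ⟨x, z, hxl, hzl, hxz, hxB, hzB, hzπ, huniq⟩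
  -- case analysis on which B-lines host p1, p2
  rcases hc1 with rfl | rfl | rfl <;> rcases hc2 with rfl | rfl | rfl
  · exact absurd (line_sub_plane lℓ h12' hp1 hp2 (hπ1 hp1b) (hπ1 hp2b)) hℓπ
  · exact absurd (line_sub_plane lℓ h12' hp1 hp2 (hπ1 hp1b) (hπ2 hp2b)) hℓπ
  · exact finish p1 p2 hp1 hp2 h12' (Or.inl hp1b) hp2b
  · exact absurd (line_sub_plane lℓ h12' hp1 hp2 (hπ2 hp1b) (hπ1 hp2b)) hℓπ
  · exact absurd (line_sub_plane lℓ h12' hp1 hp2 (hπ2 hp1b) (hπ2 hp2b)) hℓπ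
  · exact finish p1 p2 hp1 hp2 h12' (Or.inr hp1b) hp2b
  · exact finish p2 p1 hp2 hp1 h12'.symm (Or.inl hp2b) hp1b
  · exact finish p2 p1 hp2 hp1 h12'.symm (Or.inr hp2b) hp1b
  · exact absurd (line_eq_of_two lℓ (cfg.lineB b2' hb2') h12' hp1 hp2 hp1b hp2b) hℓB3

end Cfg
end Stmt6
namespace Stmt6
namespace Cfg

variable {A B C D : Set (Set (Fin 3 → ℝ))}

/-- Case M: the transversal's plane contains B1, B2; the third crossing point avoids
B1 ∪ B2. Contradiction. -/
lemma stageM (cfg : Cfg A B C D) {a1 B1 B2 B3 : Set (Fin 3 → ℝ)}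
    {n : Fin 3 → ℝ} {c : ℝ} {qk : Fin 3 → ℝ}
    (ha1 : a1 ∈ A) (hB1 : B1 ∈ B) (hB2 : B2 ∈ B) (hB3 : B3 ∈ B)
    (h12 : B1 ≠ B2) (h13 : B1 ≠ B3) (h23 : B2 ≠ B3)
    (hn : n ≠ 0) (hπa : a1 ⊆ Pl n c) (hπ1 : B1 ⊆ Pl n c) (hπ2 : B2 ⊆ Pl n c)
    (hB3π : ¬ B3 ⊆ Pl n c)
    (hqa : qk ∈ a1) (hqB3 : qk ∈ B3) (hq1 : qk ∉ B1) (hq2 : qk ∉ B2) : False := by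
  -- a line of A not in the plane
  have hAnot : ¬ ∀ a ∈ A, a ⊆ Pl n c := cfg.A_not_coplanar hn
  push_neg at hAnot
  obtain ⟨a', ha', ha'π⟩ := hAnot
  obtain ⟨x, W, hxa, hWa, hxW, hxB, hWB3, hWπ, huniq⟩ :=
    cfg.off_plane_line hB1 hB2 hB3 h12 h13 h23 hπ1 hπ2 (Or.inl ha') ha'π
  -- the CD-point of a'
  obtain ⟨P', hP'a, ⟨c', hc', hP'c⟩, ⟨d', hd', hP'd⟩⟩ := cfg.tA_CD a' ha'
  have hP'b : ∀ b ∈ B, P' ∉ b := fun b hb hPb =>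
    cfg.nocol P' ⟨a', ha', hP'a⟩ ⟨b, hb, hPb⟩ ⟨c', hc', hP'c⟩ ⟨d', hd', hP'd⟩
  have hP'π : P' ∉ Pl n c := by
    intro h
    have := huniq P' hP'a h
    rcases hxB with hx1 | hx2
    · exact hP'b B1 hB1 (this ▸ hx1)
    · exact hP'b B2 hB2 (this ▸ hx2)
  -- c' and d' are not in the plane
  have hc'π : ¬ c' ⊆ Pl n c := fun h => hP'π (h hP'c)
  have hd'π : ¬ d' ⊆ Pl n c := fun h => hP'π (h hP'd)
  obtain ⟨yc, zc, hycc, hzcc, hyczc, hycB, hzcB3, hzcπ, huniqc⟩ :=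
    cfg.off_plane_line hB1 hB2 hB3 h12 h13 h23 hπ1 hπ2 (Or.inr (Or.inl hc')) hc'π
  obtain ⟨yd, zd, hydd, hzdd, hydzd, hydB, hzdB3, hzdπ, huniqd⟩ :=
    cfg.off_plane_line hB1 hB2 hB3 h12 h13 h23 hπ1 hπ2 (Or.inr (Or.inr hd')) hd'π
  -- the plane σ through B3 and P'
  obtain ⟨m, d0, hm, hσB3, hσP'⟩ := plane_of_line_pt (cfg.lineB B3 hB3) (hP'b B3 hB3)
  have la' := cfg.lineA a' ha'
  have lc' := cfg.lineC c' hc'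
  have ld' := cfg.lineD d' hd'
  have hP'W : P' ≠ W := fun h => hP'b B3 hB3 (h ▸ hWB3)
  have ha'σ : a' ⊆ Pl m d0 :=
    line_sub_plane la' hP'W hP'a hWa hσP' (hσB3 hWB3)
  have hP'zc : P' ≠ zc := fun h => hP'b B3 hB3 (h ▸ hzcB3)
  have hc'σ : c' ⊆ Pl m d0 :=
    line_sub_plane lc' hP'zc hP'c hzcc hσP' (hσB3 hzcB3)
  have hP'zd : P' ≠ zd := fun h => hP'b B3 hB3 (h ▸ hzdB3)
  have hd'σ : d' ⊆ Pl m d0 :=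
    line_sub_plane ld' hP'zd hP'd hzdd hσP' (hσB3 hzdB3)
  have hσπ : Pl m d0 ≠ Pl n c := by
    intro h
    exact hWπ (h ▸ (hσB3 hWB3))
  -- the four points in the plane intersection
  have hqσ : qk ∈ Pl m d0 := hσB3 hqB3
  have hqπ : qk ∈ Pl n c := hπa hqa
  have hxσ : x ∈ Pl m d0 := ha'σ hxa
  have hxπ : x ∈ Pl n c := by
    rcases hxB with h | h
    · exact hπ1 h
    · exact hπ2 h
  have hycσ : yc ∈ Pl m d0 := hc'σ hycc
  have hycπ : yc ∈ Pl n c := by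
    rcases hycB with h | h
    · exact hπ1 h
    · exact hπ2 h
  have hydσ : yd ∈ Pl m d0 := hd'σ hydd
  have hydπ : yd ∈ Pl n c := by
    rcases hydB with h | h
    · exact hπ1 h
    · exact hπ2 h
  have hqx : qk ≠ x := by
    intro h
    rcases hxB with h1 | h1
    · exact hq1 (h ▸ h1)
    · exact hq2 (h ▸ h1)
  have hycμ : yc ∈ LineThru qk x :=
    planes_inter_collinear hm hn hσπ hqx hqσ hxσ hycσ hqπ hxπ hycπ
  have hydμ : yd ∈ LineThru qk x :=
    planes_inter_collinear hm hn hσπ hqx hqσ hxσ hydσ hqπ hxπ hydπ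
  have lμ : IsLine (LineThru qk x) := isLine_lineThru hqx
  -- two points of μ on the same B-line (∌ qk) must be equal
  have same : ∀ Bt, Bt ∈ B → qk ∉ Bt → ∀ u v, u ∈ LineThru qk x → v ∈ LineThru qk x →
      u ∈ Bt → v ∈ Bt → u = v := by
    intro Bt hBt hqBt u v huμ hvμ huB hvB
    by_contra huv
    have := line_eq_of_two lμ (cfg.lineB Bt hBt) huv huμ hvμ huB hvB
    exact hqBt (this ▸ (left_mem_lineThru qk x))
  have hxμ : x ∈ LineThru qk x := right_mem_lineThru qk x
  -- pairwise coincidences give line equalities across classes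
  have killac : x ≠ yc := by
    intro h
    have hxc' : x ∈ c' := h ▸ hycc
    have hP'x : P' ≠ x := by
      intro hh
      rcases hxB with h1 | h1
      · exact hP'b B1 hB1 (hh ▸ h1)
      · exact hP'b B2 hB2 (hh ▸ h1)
    have := line_eq_of_two la' lc' hP'x hP'a hxa hP'c hxc'
    exact cfg.dAC a' ha' (this ▸ hc')
  have killad : x ≠ yd := by
    intro h
    have hxd' : x ∈ d' := h ▸ hydd
    have hP'x : P' ≠ x := by
      intro hh
      rcases hxB with h1 | h1
      · exact hP'b B1 hB1 (hh ▸ h1)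
      · exact hP'b B2 hB2 (hh ▸ h1)
    have := line_eq_of_two la' ld' hP'x hP'a hxa hP'd hxd'
    exact cfg.dAD a' ha' (this ▸ hd')
  have killcd : yc ≠ yd := by
    intro h
    have hycd' : yc ∈ d' := h ▸ hydd
    have hP'yc : P' ≠ yc := by
      intro hh
      rcases hycB with h1 | h1
      · exact hP'b B1 hB1 (hh ▸ h1)
      · exact hP'b B2 hB2 (hh ▸ h1)
    have := line_eq_of_two lc' ld' hP'yc hP'c hycc hP'd hycd'
    exact cfg.dCD c' hc' (this ▸ hd')
  -- pigeonhole: x, yc, yd ∈ B1 ∪ B2, pairwise distinct, all on μ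
  rcases hxB with hx1 | hx1 <;> rcases hycB with hy1 | hy1 <;> rcases hydB with hd1 | hd1
  · exact killac (same B1 hB1 hq1 x yc hxμ hycμ hx1 hy1)
  · exact killac (same B1 hB1 hq1 x yc hxμ hycμ hx1 hy1)
  · exact killad (same B1 hB1 hq1 x yd hxμ hydμ hx1 hd1)
  · exact killcd (same B2 hB2 hq2 yc yd hycμ hydμ hy1 hd1)
  · exact killcd (same B1 hB1 hq1 yc yd hycμ hydμ hy1 hd1)
  · exact killad (same B2 hB2 hq2 x yd hxμ hydμ hx1 hd1)
  · exact killac (same B2 hB2 hq2 x yc hxμ hycμ hx1 hy1)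
  · exact killac (same B2 hB2 hq2 x yc hxμ hycμ hx1 hy1)

end Cfg
end Stmt6
namespace Stmt6
namespace Cfg

variable {A B C D : Set (Set (Fin 3 → ℝ))}

lemma stageS' (cfg : Cfg A B C D) {a1 B1 B2 B3 c_q d_2 cst dst : Set (Fin 3 → ℝ)}
    {n : Fin 3 → ℝ} {c : ℝ} {q q2 P : Fin 3 → ℝ}
    (ha1 : a1 ∈ A) (hB1 : B1 ∈ B) (hB2 : B2 ∈ B) (hB3 : B3 ∈ B)
    (h12 : B1 ≠ B2) (h13 : B1 ≠ B3) (h23 : B2 ≠ B3)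
    (hn : n ≠ 0) (hπa : a1 ⊆ Pl n c) (hπ1 : B1 ⊆ Pl n c) (hπ2 : B2 ⊆ Pl n c)
    (hB3π : ¬ B3 ⊆ Pl n c)
    (hqa : q ∈ a1) (hqB1 : q ∈ B1) (hqB3 : q ∈ B3)
    (hq2a : q2 ∈ a1) (hq2B2 : q2 ∈ B2) (hqq2 : q ≠ q2)
    (hcq : c_q ∈ C) (hqcq : q ∈ c_q)
    (hd2 : d_2 ∈ D) (hq2d2 : q2 ∈ d_2)
    (hPa : P ∈ a1) (hcst : cst ∈ C) (hPc : P ∈ cst) (hdst : dst ∈ D) (hPd : P ∈ dst) :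
    False := by
  have la1 := cfg.lineA a1 ha1
  have lB1 := cfg.lineB B1 hB1
  have lB2 := cfg.lineB B2 hB2
  have lB3 := cfg.lineB B3 hB3
  have lcst := cfg.lineC cst hcst
  have lcq := cfg.lineC c_q hcq
  have ha1B1 : a1 ≠ B1 := by rintro rfl; exact cfg.dAB a1 ha1 hB1
  have ha1B2 : a1 ≠ B2 := by rintro rfl; exact cfg.dAB a1 ha1 hB2
  have hqB2 : q ∉ B2 := fun h => hqq2 (inter_unique la1 lB2 ha1B2 hqa h hq2a hq2B2)
  have hq2B1 : q2 ∉ B1 := fun h =>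
    hqq2 ((inter_unique la1 lB1 ha1B1 hq2a h hqa hqB1).symm)
  have hPb : ∀ b ∈ B, P ∉ b := fun b hb hPb' =>
    cfg.nocol P ⟨a1, ha1, hPa⟩ ⟨b, hb, hPb'⟩ ⟨cst, hcst, hPc⟩ ⟨dst, hdst, hPd⟩
  have hPq : P ≠ q := fun h => hPb B1 hB1 (h ▸ hqB1)
  have hPq2 : P ≠ q2 := fun h => hPb B2 hB2 (h ▸ hq2B2)
  have no_d_q : ∀ d ∈ D, q ∉ d := fun d hd h =>
    cfg.nocol q ⟨a1, ha1, hqa⟩ ⟨B1, hB1, hqB1⟩ ⟨c_q, hcq, hqcq⟩ ⟨d, hd, h⟩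
  have no_c_q2 : ∀ cc ∈ C, q2 ∉ cc := fun cc hcc h =>
    cfg.nocol q2 ⟨a1, ha1, hq2a⟩ ⟨B2, hB2, hq2B2⟩ ⟨cc, hcc, h⟩ ⟨d_2, hd2, hq2d2⟩
  have Benum := enum3 cfg.cardB hB1 hB2 hB3 h12 h13 h23
  have hqπ : q ∈ Pl n c := hπa hqa
  -- every other-class line through q lies in the plane
  have thru_q : ∀ ℓ, (ℓ ∈ A ∨ ℓ ∈ C ∨ ℓ ∈ D) → q ∈ ℓ → ℓ ⊆ Pl n c := by
    intro ℓ hcls hqℓ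
    have lℓ : IsLine ℓ := by
      rcases hcls with h | h | h
      · exact cfg.lineA ℓ h
      · exact cfg.lineC ℓ h
      · exact cfg.lineD ℓ h
    have hℓb : ∀ b ∈ B, ℓ ≠ b := by
      intro b hb
      rintro rfl
      rcases hcls with h | h | h
      · exact cfg.dAB ℓ h hb
      · exact cfg.dBC ℓ hb h
      · exact cfg.dBD ℓ hb h
    obtain ⟨p1, p2, h12', hp1, hp2, ⟨b1', hb1', hp1b⟩, ⟨b2', hb2', hp2b⟩⟩ :=
      cfg.bpts_other hcls
    have claim : ∀ p b', p ∈ ℓ → b' ∈ B → p ∈ b' → p = q ∨ p ∈ B2 := by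
      intro p b' hp hb' hpb'
      rcases Benum b' hb' with h | h | h
      · rw [h] at hpb'
        exact Or.inl (inter_unique lℓ lB1 (hℓb B1 hB1) hp hpb' hqℓ hqB1)
      · rw [h] at hpb'
        exact Or.inr hpb'
      · rw [h] at hpb'
        exact Or.inl (inter_unique lℓ lB3 (hℓb B3 hB3) hp hpb' hqℓ hqB3)
    have hs : ∃ s, s ∈ ℓ ∧ s ∈ B2 := by
      rcases claim p1 b1' hp1 hb1' hp1b with h1 | h1
      · rcases claim p2 b2' hp2 hb2' hp2b with h2 | h2
        · exact absurd (h1.trans h2.symm) h12'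
        · exact ⟨p2, hp2, h2⟩
      · exact ⟨p1, hp1, h1⟩
    obtain ⟨s, hsl, hsB2⟩ := hs
    have hqs : q ≠ s := fun h => hqB2 (h ▸ hsB2)
    exact line_sub_plane lℓ hqs hqℓ hsl hqπ (hπ2 hsB2)
  -- a line of C or D through a point of a1 off the b-lines lies in the plane
  have star_sub : ∀ ℓ, (ℓ ∈ A ∨ ℓ ∈ C ∨ ℓ ∈ D) → P ∈ ℓ → ℓ ⊆ Pl n c := by
    intro ℓ hcls hPℓ
    by_cases h : ℓ ⊆ Pl n c
    · exact h
    · exfalso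
      have hqℓ : q ∉ ℓ := fun hq' => h (thru_q ℓ hcls hq')
      obtain ⟨x, z, hxl, hzl, hxz, hxB, hzB3, hzπ, huniq⟩ :=
        cfg.off_plane_line hB1 hB2 hB3 h12 h13 h23 hπ1 hπ2 hcls h
      have := huniq P hPℓ (hπa hPa)
      rcases hxB with h1 | h1
      · exact hPb B1 hB1 (this ▸ h1)
      · exact hPb B2 hB2 (this ▸ h1)
  have cst_sub : cst ⊆ Pl n c := star_sub cst (Or.inr (Or.inl hcst)) hPc
  have dst_sub : dst ⊆ Pl n c := star_sub dst (Or.inr (Or.inr hdst)) hPd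
  have cq_sub : c_q ⊆ Pl n c := thru_q c_q (Or.inr (Or.inl hcq)) hqcq
  have hqcst : q ∉ cst := by
    intro hq'
    have heq := line_eq_of_two lcst la1 hPq hPc hq' hPa hqa
    exact cfg.dAC a1 ha1 (heq ▸ hcst)
  have hcqcst : c_q ≠ cst := fun h => hqcst (h ▸ hqcq)
  -- the AD-canonical point K of c_q, and forcing its host lines into the plane
  obtain ⟨K, hKcq, ⟨aK, haK, hKaK⟩, ⟨dK, hdK, hKdK⟩⟩ := cfg.tC_AD c_q hcq
  have hKb : ∀ b ∈ B, K ∉ b := fun b hb h =>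
    cfg.nocol K ⟨aK, haK, hKaK⟩ ⟨b, hb, h⟩ ⟨c_q, hcq, hKcq⟩ ⟨dK, hdK, hKdK⟩
  have hKπ : K ∈ Pl n c := cq_sub hKcq
  have in_plane_of_K : ∀ ℓ, (ℓ ∈ A ∨ ℓ ∈ C ∨ ℓ ∈ D) → K ∈ ℓ → q ∉ ℓ → ℓ ⊆ Pl n c := by
    intro ℓ hcls hKℓ hqℓ
    by_cases h : ℓ ⊆ Pl n c
    · exact h
    · exfalso
      obtain ⟨x, z, hxl, hzl, hxz, hxB, hzB3, hzπ, huniq⟩ :=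
        cfg.off_plane_line hB1 hB2 hB3 h12 h13 h23 hπ1 hπ2 hcls h
      have := huniq K hKℓ hKπ
      rcases hxB with h1 | h1
      · exact hKb B1 hB1 (this ▸ h1)
      · exact hKb B2 hB2 (this ▸ h1)
  have aK_sub : aK ⊆ Pl n c := by
    by_cases hqaK : q ∈ aK
    · exact thru_q aK (Or.inl haK) hqaK
    · exact in_plane_of_K aK (Or.inl haK) hKaK hqaK
  have dK_sub : dK ⊆ Pl n c := by
    have hqdK : q ∉ dK := no_d_q dK hdK
    exact in_plane_of_K dK (Or.inr (Or.inr hdK)) hKdK hqdK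
  -- the third C-line
  obtain ⟨c₃, hc₃, hc₃cq, hc₃cst, enumC⟩ := three_enum cfg.cardC hcq hcst hcqcst
  have hc₃π : ¬ c₃ ⊆ Pl n c := by
    intro h
    have hCco : ∀ m ∈ C, m ⊆ Pl n c := by
      intro m hmC
      rcases enumC m hmC with hh | hh | hh
      · rw [hh]; exact cq_sub
      · rw [hh]; exact cst_sub
      · rw [hh]; exact h
    exact cfg.C_not_coplanar hn hCco
  have lc₃ := cfg.lineC c₃ hc₃
  have hqc₃ : q ∉ c₃ := fun h => hc₃π (thru_q c₃ (Or.inr (Or.inl hc₃)) h)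
  obtain ⟨y₃, Z₃, hy₃c, hZ₃c, hy₃Z₃, hy₃B, hZ₃B3, hZ₃π, uniq₃⟩ :=
    cfg.off_plane_line hB1 hB2 hB3 h12 h13 h23 hπ1 hπ2 (Or.inr (Or.inl hc₃)) hc₃π
  -- the AD point M of c₃
  obtain ⟨M, hMc₃, ⟨α, hα, hMα⟩, ⟨δ, hδ, hMδ⟩⟩ := cfg.tC_AD c₃ hc₃
  have lα := cfg.lineA α hα
  have lδ := cfg.lineD δ hδ
  have hMb : ∀ b ∈ B, M ∉ b := fun b hb h =>
    cfg.nocol M ⟨α, hα, hMα⟩ ⟨b, hb, h⟩ ⟨c₃, hc₃, hMc₃⟩ ⟨δ, hδ, hMδ⟩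
  have hMπ : M ∉ Pl n c := by
    intro h
    have := uniq₃ M hMc₃ h
    rcases hy₃B with h1 | h1
    · exact hMb B1 hB1 (this ▸ h1)
    · exact hMb B2 hB2 (this ▸ h1)
  have hαπ : ¬ α ⊆ Pl n c := fun h => hMπ (h hMα)
  have hqα : q ∉ α := fun h => hMπ (thru_q α (Or.inl hα) h hMα)
  obtain ⟨xM, W, hxMα, hWα, hxMW, hxMB, hWB3, hWπ, uniqα⟩ :=
    cfg.off_plane_line hB1 hB2 hB3 h12 h13 h23 hπ1 hπ2 (Or.inl hα) hαπ
  have hδπ : ¬ δ ⊆ Pl n c := fun h => hMπ (h hMδ)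
  obtain ⟨yM, Zδ, hyMδ, hZδδ, hyMZδ, hyMB, hZδB3, hZδπ, uniqδ⟩ :=
    cfg.off_plane_line hB1 hB2 hB3 h12 h13 h23 hπ1 hπ2 (Or.inr (Or.inr hδ)) hδπ
  -- plane σ through B3 and M
  obtain ⟨m, d0, hm, hσB3, hσM⟩ := plane_of_line_pt lB3 (hMb B3 hB3)
  have hMZ₃ : M ≠ Z₃ := fun h => hMb B3 hB3 (h ▸ hZ₃B3)
  have hc₃σ : c₃ ⊆ Pl m d0 := line_sub_plane lc₃ hMZ₃ hMc₃ hZ₃c hσM (hσB3 hZ₃B3)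
  have hMW : M ≠ W := fun h => hMb B3 hB3 (h ▸ hWB3)
  have hασ : α ⊆ Pl m d0 := line_sub_plane lα hMW hMα hWα hσM (hσB3 hWB3)
  have hMZδ : M ≠ Zδ := fun h => hMb B3 hB3 (h ▸ hZδB3)
  have hδσ : δ ⊆ Pl m d0 := line_sub_plane lδ hMZδ hMδ hZδδ hσM (hσB3 hZδB3)
  have hσπ : Pl m d0 ≠ Pl n c := fun h => hZ₃π (h ▸ (hσB3 hZ₃B3))
  -- membership of the four key points in both planes
  have hqσ : q ∈ Pl m d0 := hσB3 hqB3
  have hy₃σ : y₃ ∈ Pl m d0 := hc₃σ hy₃c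
  have hy₃π : y₃ ∈ Pl n c := by
    rcases hy₃B with h | h
    · exact hπ1 h
    · exact hπ2 h
  have hxMσ : xM ∈ Pl m d0 := hασ hxMα
  have hxMπ : xM ∈ Pl n c := by
    rcases hxMB with h | h
    · exact hπ1 h
    · exact hπ2 h
  have hyMσ : yM ∈ Pl m d0 := hδσ hyMδ
  have hyMπ : yM ∈ Pl n c := by
    rcases hyMB with h | h
    · exact hπ1 h
    · exact hπ2 h
  -- pairwise distinctness of the crossings
  have hMy₃ : M ≠ y₃ := by
    intro h
    rcases hy₃B with h1 | h1
    · exact hMb B1 hB1 (h ▸ h1)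
    · exact hMb B2 hB2 (h ▸ h1)
  have hMxM : M ≠ xM := by
    intro h
    rcases hxMB with h1 | h1
    · exact hMb B1 hB1 (h ▸ h1)
    · exact hMb B2 hB2 (h ▸ h1)
  have hMyM : M ≠ yM := by
    intro h
    rcases hyMB with h1 | h1
    · exact hMb B1 hB1 (h ▸ h1)
    · exact hMb B2 hB2 (h ▸ h1)
  have k1 : y₃ ≠ xM := by
    intro h
    have hxc₃ : xM ∈ c₃ := h ▸ hy₃c
    have heq := line_eq_of_two lc₃ lα hMxM hMc₃ hxc₃ hMα hxMα
    exact cfg.dAC c₃ (heq ▸ hα) hc₃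
  have k2 : y₃ ≠ yM := by
    intro h
    have hyc₃ : yM ∈ c₃ := h ▸ hy₃c
    have heq := line_eq_of_two lc₃ lδ hMyM hMc₃ hyc₃ hMδ hyMδ
    exact cfg.dCD c₃ hc₃ (heq ▸ hδ)
  have k3 : xM ≠ yM := by
    intro h
    have hyα : yM ∈ α := h ▸ hxMα
    have heq := line_eq_of_two lα lδ hMyM hMα hyα hMδ hyMδ
    exact cfg.dAD α hα (heq ▸ hδ)
  have hqy₃ : q ≠ y₃ := fun h => hqc₃ (h ▸ hy₃c)
  -- collinearity in σ ∩ π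
  have hxMμ : xM ∈ LineThru q y₃ :=
    planes_inter_collinear hm hn hσπ hqy₃ hqσ hy₃σ hxMσ hqπ hy₃π hxMπ
  have hyMμ : yM ∈ LineThru q y₃ :=
    planes_inter_collinear hm hn hσπ hqy₃ hqσ hy₃σ hyMσ hqπ hy₃π hyMπ
  have lμ : IsLine (LineThru q y₃) := isLine_lineThru hqy₃
  have hy₃μ : y₃ ∈ LineThru q y₃ := right_mem_lineThru q y₃
  -- the line μ must be B1
  have mkB1 : ∀ u v, u ∈ LineThru q y₃ → v ∈ LineThru q y₃ → u ≠ v →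
      u ∈ B1 → v ∈ B1 → LineThru q y₃ = B1 := fun u v hu hv huv h1 h2 =>
    line_eq_of_two lμ lB1 huv hu hv h1 h2
  have mkB2 : ∀ u v, u ∈ LineThru q y₃ → v ∈ LineThru q y₃ → u ≠ v →
      u ∈ B2 → v ∈ B2 → False := by
    intro u v hu hv huv h1 h2
    have heq := line_eq_of_two lμ lB2 huv hu hv h1 h2
    exact hqB2 (heq ▸ (left_mem_lineThru q y₃))
  have hB1eq : LineThru q y₃ = B1 := by
    rcases hy₃B with h1 | h1 <;> rcases hxMB with h2 | h2 <;> rcases hyMB with h3 | h3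
    · exact mkB1 y₃ xM hy₃μ hxMμ k1 h1 h2
    · exact mkB1 y₃ xM hy₃μ hxMμ k1 h1 h2
    · exact mkB1 y₃ yM hy₃μ hyMμ k2 h1 h3
    · exact absurd (mkB2 xM yM hxMμ hyMμ k3 h2 h3) (fun h => h)
    · exact mkB1 xM yM hxMμ hyMμ k3 h2 h3
    · exact absurd (mkB2 y₃ yM hy₃μ hyMμ k2 h1 h3) (fun h => h)
    · exact absurd (mkB2 y₃ xM hy₃μ hxMμ k1 h1 h2) (fun h => h)
    · exact absurd (mkB2 y₃ xM hy₃μ hxMμ k1 h1 h2) (fun h => h)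
  have hy₃B1 : y₃ ∈ B1 := hB1eq ▸ hy₃μ
  have hxMB1 : xM ∈ B1 := hB1eq ▸ hxMμ
  have hyMB1 : yM ∈ B1 := hB1eq ▸ hyMμ
  -- α's b-incidences are exactly xM and W
  have hαb : ∀ p b', p ∈ α → b' ∈ B → p ∈ b' → p = xM ∨ p = W := by
    intro p b' hp hb' hpb'
    rcases Benum b' hb' with h | h | h
    · rw [h] at hpb'; exact Or.inl (uniqα p hp (hπ1 hpb'))
    · rw [h] at hpb'; exact Or.inl (uniqα p hp (hπ2 hpb'))
    · rw [h] at hpb'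
      have hαB3 : α ≠ B3 := by rintro rfl; exact cfg.dAB α hα hB3
      exact Or.inr (inter_unique lα lB3 hαB3 hp hpb' hWα hWB3)
  -- no C-line passes through W
  have no_c_W : ∀ cc ∈ C, W ∉ cc := by
    intro cc hcc hW
    rcases enumC cc hcc with hh | hh | hh
    · rw [hh] at hW; exact hWπ (cq_sub hW)
    · rw [hh] at hW; exact hWπ (cst_sub hW)
    · rw [hh] at hW
      have heq := line_eq_of_two lc₃ lα hMW hMc₃ hW hMα hWα
      exact cfg.dAC c₃ (heq ▸ hα) hc₃
  -- the canonical (B,C) and (B,D) points of α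
  obtain ⟨u, huα, ⟨bu, hbu, hubu⟩, ⟨cu, hcu, hucu⟩⟩ := cfg.tA_BC α hα
  obtain ⟨u', hu'α, ⟨bu', hbu', hu'bu⟩, ⟨du', hdu', hu'du⟩⟩ := cfg.tA_BD α hα
  have huu' : u ≠ u' := by
    rintro rfl
    exact cfg.nocol u ⟨α, hα, huα⟩ ⟨bu, hbu, hubu⟩ ⟨cu, hcu, hucu⟩ ⟨du', hdu', hu'du⟩
  have hu_loc := hαb u bu huα hbu hubu
  have hu'_loc := hαb u' bu' hu'α hbu' hu'bu
  have huxM : u = xM := by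
    rcases hu_loc with h | h
    · exact h
    · exact absurd (h ▸ hucu) (no_c_W cu hcu)
  have hu'W : u' = W := by
    rcases hu'_loc with h | h
    · exact absurd (huxM.trans h.symm) huu'
    · exact h
  have hWdu : W ∈ du' := hu'W ▸ hu'du
  -- endgame on the D-class
  have hWdst : W ∉ dst := fun h => hWπ (dst_sub h)
  have hWdK : W ∉ dK := fun h => hWπ (dK_sub h)
  have hWδ : W ∉ δ := by
    intro h
    have heq := line_eq_of_two lα lδ hMW hMα hWα hMδ h
    exact cfg.dAD α hα (heq ▸ hδ)
  have hdstδ : dst ≠ δ := by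
    rintro rfl
    exact hMπ (dst_sub hMδ)
  by_cases hj : dst = dK
  · -- case (j2)
    obtain ⟨d₆, hd₆, hd₆dst, hd₆δ, enumD⟩ := three_enum cfg.cardD hdst hδ hdstδ
    have hdu'd₆ : du' = d₆ := by
      rcases enumD du' hdu' with h | h | h
      · rw [h] at hWdu; exact absurd hWdu hWdst
      · rw [h] at hWdu; exact absurd hWdu hWδ
      · exact h
    have hWd₆ : W ∈ d₆ := hdu'd₆ ▸ hWdu
    rcases enumD d_2 hd2 with h | h | h
    · -- d_2 = dst: dst = a1, contradiction
      rw [h] at hq2d2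
      have heq := line_eq_of_two (cfg.lineD dst hdst) la1 hPq2 hPd hq2d2 hPa hq2a
      exact cfg.dAD a1 ha1 (heq ▸ hdst)
    · -- d_2 = δ: q2 on δ forces q2 = yM ∈ B1
      rw [h] at hq2d2
      have := uniqδ q2 hq2d2 (hπ2 hq2B2)
      exact hq2B1 (this ▸ hyMB1)
    · -- d_2 = d₆
      rw [h] at hq2d2
      have ld₆ := cfg.lineD d₆ hd₆
      have hd₆π : ¬ d₆ ⊆ Pl n c := fun hh => hWπ (hh hWd₆)
      have hd₆uniq : ∀ p ∈ d₆, p ∈ Pl n c → p = q2 := by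
        intro p hp hpπ
        by_contra hpq
        exact hd₆π (line_sub_plane ld₆ hpq hp hq2d2 hpπ (hπ2 hq2B2))
      obtain ⟨r, hrd₆, ⟨br, hbr, hrbr⟩, ⟨cr, hcr, hrcr⟩⟩ := cfg.tD_BC d₆ hd₆
      rcases Benum br hbr with h' | h' | h'
      · rw [h'] at hrbr
        have := hd₆uniq r hrd₆ (hπ1 hrbr)
        exact hq2B1 (this ▸ hrbr)
      · rw [h'] at hrbr
        have := hd₆uniq r hrd₆ (hπ2 hrbr)
        exact no_c_q2 cr hcr (this ▸ hrcr)
      · rw [h'] at hrbr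
        have hd₆B3 : d₆ ≠ B3 := by rintro rfl; exact cfg.dBD d₆ hB3 hd₆
        have := inter_unique ld₆ lB3 hd₆B3 hrd₆ hrbr hWd₆ hWB3
        exact no_c_W cr hcr (this ▸ hrcr)
  · -- case (j1): dst ≠ dK, D = {dst, dK, δ}
    have hdKδ : dK ≠ δ := by
      rintro rfl
      exact hMπ (dK_sub hMδ)
    have enumD := enum3 cfg.cardD hdst hdK hδ hj hdstδ hdKδ
    rcases enumD du' hdu' with h | h | h
    · rw [h] at hWdu; exact hWdst hWdu
    · rw [h] at hWdu; exact hWdK hWdu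
    · rw [h] at hWdu; exact hWδ hWdu

end Cfg
end Stmt6
namespace Stmt6
namespace Cfg

variable {A B C D : Set (Set (Fin 3 → ℝ))}

lemma stageS (cfg : Cfg A B C D) {a1 B1 B2 B3 : Set (Fin 3 → ℝ)}
    {n : Fin 3 → ℝ} {c : ℝ} {q q2 : Fin 3 → ℝ}
    (ha1 : a1 ∈ A) (hB1 : B1 ∈ B) (hB2 : B2 ∈ B) (hB3 : B3 ∈ B)
    (h12 : B1 ≠ B2) (h13 : B1 ≠ B3) (h23 : B2 ≠ B3)
    (hn : n ≠ 0) (hπa : a1 ⊆ Pl n c) (hπ1 : B1 ⊆ Pl n c) (hπ2 : B2 ⊆ Pl n c)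
    (hB3π : ¬ B3 ⊆ Pl n c)
    (hqa : q ∈ a1) (hqB1 : q ∈ B1) (hqB3 : q ∈ B3)
    (hq2a : q2 ∈ a1) (hq2B2 : q2 ∈ B2) : False := by
  have la1 := cfg.lineA a1 ha1
  have lB1 := cfg.lineB B1 hB1
  have lB2 := cfg.lineB B2 hB2
  have lB3 := cfg.lineB B3 hB3
  have Benum := enum3 cfg.cardB hB1 hB2 hB3 h12 h13 h23
  have hℓb : ∀ b ∈ B, a1 ≠ b := by
    intro b hb; rintro rfl; exact cfg.dAB a1 ha1 hb
  -- q ≠ q2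
  have hqq2 : q ≠ q2 := by
    rintro rfl
    have claim : ∀ p b', p ∈ a1 → b' ∈ B → p ∈ b' → p = q := by
      intro p b' hp hb' hpb'
      rcases Benum b' hb' with h | h | h
      · rw [h] at hpb'; exact inter_unique la1 lB1 (hℓb B1 hB1) hp hpb' hqa hqB1
      · rw [h] at hpb'; exact inter_unique la1 lB2 (hℓb B2 hB2) hp hpb' hq2a hq2B2
      · rw [h] at hpb'; exact inter_unique la1 lB3 (hℓb B3 hB3) hp hpb' hqa hqB3
    obtain ⟨u, huα, ⟨bu, hbu, hubu⟩, ⟨cu, hcu, hucu⟩⟩ := cfg.tA_BC a1 ha1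
    obtain ⟨u', hu'α, ⟨bu', hbu', hu'bu⟩, ⟨du', hdu', hu'du⟩⟩ := cfg.tA_BD a1 ha1
    have huu' : u ≠ u' := by
      rintro rfl
      exact cfg.nocol u ⟨a1, ha1, huα⟩ ⟨bu, hbu, hubu⟩ ⟨cu, hcu, hucu⟩ ⟨du', hdu', hu'du⟩
    exact huu' ((claim u bu huα hbu hubu).trans (claim u' bu' hu'α hbu' hu'bu).symm)
  -- the canonical (B,C) and (B,D) points of a1 sit at q and q2
  have claim2 : ∀ p b', p ∈ a1 → b' ∈ B → p ∈ b' → p = q ∨ p = q2 := by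
    intro p b' hp hb' hpb'
    rcases Benum b' hb' with h | h | h
    · rw [h] at hpb'; exact Or.inl (inter_unique la1 lB1 (hℓb B1 hB1) hp hpb' hqa hqB1)
    · rw [h] at hpb'; exact Or.inr (inter_unique la1 lB2 (hℓb B2 hB2) hp hpb' hq2a hq2B2)
    · rw [h] at hpb'; exact Or.inl (inter_unique la1 lB3 (hℓb B3 hB3) hp hpb' hqa hqB3)
  obtain ⟨u, hua, ⟨bu, hbu, hubu⟩, ⟨cu, hcu, hucu⟩⟩ := cfg.tA_BC a1 ha1
  obtain ⟨u', hu'a, ⟨bu', hbu', hu'bu⟩, ⟨du', hdu', hu'du⟩⟩ := cfg.tA_BD a1 ha1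
  have huu' : u ≠ u' := by
    rintro rfl
    exact cfg.nocol u ⟨a1, ha1, hua⟩ ⟨bu, hbu, hubu⟩ ⟨cu, hcu, hucu⟩ ⟨du', hdu', hu'du⟩
  obtain ⟨P, hPa, ⟨cst, hcst, hPc⟩, ⟨dst, hdst, hPd⟩⟩ := cfg.tA_CD a1 ha1
  rcases claim2 u bu hua hbu hubu with hu | hu <;>
    rcases claim2 u' bu' hu'a hbu' hu'bu with hu' | hu'
  · exact huu' (hu.trans hu'.symm)
  · -- c at q, d at q2
    rw [hu] at hucu
    rw [hu'] at hu'du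
    exact cfg.stageS' ha1 hB1 hB2 hB3 h12 h13 h23 hn hπa hπ1 hπ2 hB3π
      hqa hqB1 hqB3 hq2a hq2B2 hqq2 hcu hucu hdu' hu'du hPa hcst hPc hdst hPd
  · -- d at q, c at q2 : apply the C/D-swapped configuration
    rw [hu] at hucu
    rw [hu'] at hu'du
    exact (cfg.swapCD).stageS' ha1 hB1 hB2 hB3 h12 h13 h23 hn hπa hπ1 hπ2 hB3π
      hqa hqB1 hqB3 hq2a hq2B2 hqq2 hdu' hu'du hcu hucu hPa hdst hPd hcst hPc
  · exact huu' (hu.trans hu'.symm)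

lemma stage2 (cfg : Cfg A B C D) {a1 Bi Bj Bk : Set (Fin 3 → ℝ)}
    {n : Fin 3 → ℝ} {c : ℝ}
    (ha1 : a1 ∈ A) (hBi : Bi ∈ B) (hBj : Bj ∈ B) (hBk : Bk ∈ B)
    (hij : Bi ≠ Bj) (hik : Bi ≠ Bk) (hjk : Bj ≠ Bk)
    (hn : n ≠ 0) (hπa : a1 ⊆ Pl n c) (hπi : Bi ⊆ Pl n c) (hπj : Bj ⊆ Pl n c)
    (hmeet : ∀ b ∈ B, (a1 ∩ b).Nonempty) : False := by
  have Benum := enum3 cfg.cardB hBi hBj hBk hij hik hjk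
  have hBkπ : ¬ Bk ⊆ Pl n c := by
    intro h
    apply cfg.B_not_coplanar hn
    intro b hb
    rcases Benum b hb with hh | hh | hh
    · rw [hh]; exact hπi
    · rw [hh]; exact hπj
    · rw [hh]; exact h
  obtain ⟨qk, hqk⟩ := hmeet Bk hBk
  have hqka : qk ∈ a1 := hqk.1
  have hqkBk : qk ∈ Bk := hqk.2
  by_cases h1 : qk ∈ Bi
  · obtain ⟨q2, hq2⟩ := hmeet Bj hBj
    exact cfg.stageS ha1 hBi hBj hBk hij hik hjk hn hπa hπi hπj hBkπ
      hqka h1 hqkBk hq2.1 hq2.2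
  by_cases h2 : qk ∈ Bj
  · obtain ⟨q2, hq2⟩ := hmeet Bi hBi
    exact cfg.stageS ha1 hBj hBi hBk hij.symm hjk hik hn hπa hπj hπi hBkπ
      hqka h2 hqkBk hq2.1 hq2.2
  · exact cfg.stageM ha1 hBi hBj hBk hij hik hjk hn hπa hπi hπj hBkπ
      hqka hqkBk h1 h2

/-- THE KEY LEMMA: no line of A meets all three lines of B -/
lemma star (cfg : Cfg A B C D) {a1 b1 b2 b3 : Set (Fin 3 → ℝ)}
    (ha1 : a1 ∈ A) (hb1 : b1 ∈ B) (hb2 : b2 ∈ B) (hb3 : b3 ∈ B)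
    (h12 : b1 ≠ b2) (h13 : b1 ≠ b3) (h23 : b2 ≠ b3)
    (m1 : (a1 ∩ b1).Nonempty) (m2 : (a1 ∩ b2).Nonempty) (m3 : (a1 ∩ b3).Nonempty) :
    False := by
  have Benum := enum3 cfg.cardB hb1 hb2 hb3 h12 h13 h23
  have hmeet : ∀ b ∈ B, (a1 ∩ b).Nonempty := by
    intro b hb
    rcases Benum b hb with h | h | h
    · rw [h]; exact m1
    · rw [h]; exact m2
    · rw [h]; exact m3
  obtain ⟨P, hPa, ⟨cst, hcst, hPc⟩, ⟨dst, hdst, hPd⟩⟩ := cfg.tA_CD a1 ha1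
  have hPb : ∀ b ∈ B, P ∉ b := fun b hb hPb' =>
    cfg.nocol P ⟨a1, ha1, hPa⟩ ⟨b, hb, hPb'⟩ ⟨cst, hcst, hPc⟩ ⟨dst, hdst, hPd⟩
  obtain ⟨X, hXc, ⟨aX, haX, hXaX⟩, ⟨bX, hbX, hXbX⟩⟩ := cfg.tC_AB cst hcst
  obtain ⟨Y, hYc, ⟨bY, hbY, hYbY⟩, ⟨dY, hdY, hYdY⟩⟩ := cfg.tC_BD cst hcst
  have hXY : X ≠ Y := by
    rintro rfl
    exact cfg.nocol X ⟨aX, haX, hXaX⟩ ⟨bX, hbX, hXbX⟩ ⟨cst, hcst, hXc⟩ ⟨dY, hdY, hYdY⟩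
  have lcst := cfg.lineC cst hcst
  have hbXY : bX ≠ bY := by
    rintro rfl
    have heq := line_eq_of_two lcst (cfg.lineB bX hbX) hXY hXc hYc hXbX hYbY
    exact cfg.dBC cst (heq ▸ hbX) hcst
  obtain ⟨qX, hqX⟩ := hmeet bX hbX
  obtain ⟨qY, hqY⟩ := hmeet bY hbY
  obtain ⟨n, c, hn, hπa, hπX, hπY⟩ := cfg.pair_kill ha1 hbX hbY (Or.inl hcst)
    hPa hPc (hPb bX hbX) (hPb bY hbY) hXc hXbX hYc hYbY hqX.1 hqX.2 hqY.1 hqY.2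
  obtain ⟨Bk, hBk, hBkX, hBkY, _⟩ := three_enum cfg.cardB hbX hbY hbXY
  exact cfg.stage2 ha1 hbX hbY hBk hbXY hBkX.symm hBkY.symm hn hπa hπX hπY hmeet

end Cfg
end Stmt6
namespace Stmt6
namespace Cfg

variable {A B C D : Set (Set (Fin 3 → ℝ))}

lemma swapAB (cfg : Cfg A B C D) : Cfg B A C D where
  lineA := cfg.lineB
  lineB := cfg.lineA
  lineC := cfg.lineC
  lineD := cfg.lineD
  cardA := cfg.cardB
  cardB := cfg.cardA
  cardC := cfg.cardC
  cardD := cfg.cardD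
  dAB := fun ℓ h1 h2 => cfg.dAB ℓ h2 h1
  dAC := cfg.dBC
  dAD := cfg.dBD
  dBC := cfg.dAC
  dBD := cfg.dAD
  dCD := cfg.dCD
  tA_BC := cfg.tB_AC
  tA_BD := cfg.tB_AD
  tA_CD := cfg.tB_CD
  tB_AC := cfg.tA_BC
  tB_AD := cfg.tA_BD
  tB_CD := cfg.tA_CD
  tC_AB := cfg.tC_AB.swap
  tC_AD := cfg.tC_BD
  tC_BD := cfg.tC_AD
  tD_AB := cfg.tD_AB.swap
  tD_AC := cfg.tD_BC
  tD_BC := cfg.tD_AC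
  nocol := fun p h1 h2 h3 h4 => cfg.nocol p h2 h1 h3 h4
  noplane := fun n c hn h => cfg.noplane n c hn (fun ℓ hm => h ℓ (by
    simp only [Set.mem_union] at hm ⊢; tauto))

lemma meets_two (cfg : Cfg A B C D) {a1 : Set (Fin 3 → ℝ)} (ha1 : a1 ∈ A) :
    ∃ b1 b2, b1 ∈ B ∧ b2 ∈ B ∧ b1 ≠ b2 ∧ (a1 ∩ b1).Nonempty ∧ (a1 ∩ b2).Nonempty := by
  obtain ⟨p1, p2, h12, hp1, hp2, ⟨b1, hb1, h1⟩, _, ⟨b2, hb2, h2⟩, _⟩ := cfg.bptsA ha1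
  have hbne : b1 ≠ b2 := by
    rintro rfl
    have heq := line_eq_of_two (cfg.lineA a1 ha1) (cfg.lineB b1 hb1) h12 hp1 hp2 h1 h2
    exact cfg.dAB a1 ha1 (heq ▸ hb1)
  exact ⟨b1, b2, hb1, hb2, hbne, ⟨p1, hp1, h1⟩, ⟨p2, hp2, h2⟩⟩

/-- every line of A meets exactly two lines of B -/
lemma ncard_two (cfg : Cfg A B C D) {a1 : Set (Fin 3 → ℝ)} (ha1 : a1 ∈ A) :
    {b ∈ B | (a1 ∩ b).Nonempty}.ncard = 2 := by
  obtain ⟨b1, b2, hb1, hb2, hbne, m1, m2⟩ := cfg.meets_two ha1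
  have hS : {b ∈ B | (a1 ∩ b).Nonempty} = {b1, b2} := by
    ext b
    constructor
    · rintro ⟨hbB, hmb⟩
      by_contra hc
      simp only [Set.mem_insert_iff, Set.mem_singleton_iff] at hc
      push_neg at hc
      exact cfg.star ha1 hb1 hb2 hbB hbne (Ne.symm hc.1) (Ne.symm hc.2) m1 m2 hmb
    · rintro (rfl | rfl)
      · exact ⟨hb1, m1⟩
      · exact ⟨hb2, m2⟩
  rw [hS]
  exact Set.ncard_pair hbne

lemma exists_unique_common (cfg : Cfg A B C D) {b1 b2 : Set (Fin 3 → ℝ)}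
    (hb1 : b1 ∈ B) (hb2 : b2 ∈ B) (hne : b1 ≠ b2) :
    ∃! a, a ∈ A ∧ (a ∩ b1).Nonempty ∧ (a ∩ b2).Nonempty := by
  have cfg' := cfg.swapAB
  have hAfin : A.Finite := Set.finite_of_ncard_ne_zero (by rw [cfg.cardA]; omega)
  have hBfin : B.Finite := Set.finite_of_ncard_ne_zero (by rw [cfg.cardB]; omega)
  set N1 := {x ∈ A | (b1 ∩ x).Nonempty} with hN1def
  set N2 := {x ∈ A | (b2 ∩ x).Nonempty} with hN2def
  have hN1 : N1.ncard = 2 := cfg'.ncard_two hb1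
  have hN2 : N2.ncard = 2 := cfg'.ncard_two hb2
  have hN1sub : N1 ⊆ A := fun x hx => hx.1
  have hN2sub : N2 ⊆ A := fun x hx => hx.1
  have hN1fin : N1.Finite := hAfin.subset hN1sub
  have hN2fin : N2.Finite := hAfin.subset hN2sub
  -- existence via inclusion-exclusion
  have hunion : (N1 ∪ N2).ncard ≤ 3 := by
    have h := Set.ncard_le_ncard (Set.union_subset hN1sub hN2sub) hAfin
    rw [cfg.cardA] at h
    exact h
  have hie := Set.ncard_union_add_ncard_inter N1 N2 hN1fin hN2fin
  have hinter : (N1 ∩ N2).ncard ≠ 0 := by omega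
  obtain ⟨a, ha⟩ := Set.nonempty_of_ncard_ne_zero hinter
  have haA : a ∈ A := ha.1.1
  have ham1 : (a ∩ b1).Nonempty := by
    obtain ⟨p, hp1, hp2⟩ := ha.1.2
    exact ⟨p, hp2, hp1⟩
  have ham2 : (a ∩ b2).Nonempty := by
    obtain ⟨p, hp1, hp2⟩ := ha.2.2
    exact ⟨p, hp2, hp1⟩
  refine ⟨a, ⟨haA, ham1, ham2⟩, ?_⟩
  -- uniqueness
  rintro a' ⟨ha'A, ha'n1, ha'm2⟩
  by_contra haa0
  have haa' : a ≠ a' := fun h => haa0 h.symm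
  -- both a and a' meet exactly {b1, b2}
  have key : ∀ x, x ∈ A → (x ∩ b1).Nonempty → (x ∩ b2).Nonempty →
      {b ∈ B | (x ∩ b).Nonempty} = {b1, b2} := by
    intro x hxA hm1 hm2
    have h2' : ({b1, b2} : Set _) ⊆ {b ∈ B | (x ∩ b).Nonempty} := by
      rintro b (rfl | rfl)
      · exact ⟨hb1, hm1⟩
      · exact ⟨hb2, hm2⟩
    have hfin : {b ∈ B | (x ∩ b).Nonempty}.Finite := hBfin.subset (fun y hy => hy.1)
    exact (Set.eq_of_subset_of_ncard_le h2'
      (by rw [cfg.ncard_two hxA, Set.ncard_pair hne]) hfin).symm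
  have hMa := key a haA ham1 ham2
  have hMa' := key a' ha'A ha'n1 ha'm2
  -- the third line of B
  obtain ⟨b3, hb3, hb31, hb32, _⟩ := three_enum cfg.cardB hb1 hb2 hne
  -- b3 meets two distinct lines of A
  obtain ⟨u, v, hu, hv, huv, mu, mv⟩ := cfg'.meets_two hb3
  -- one of u, v is a or a'
  have hw : ∃ w, (w = u ∨ w = v) ∧ (w = a ∨ w = a') := by
    have h1 : ({u, v} : Set _) ⊆ A := by rintro w (rfl | rfl) <;> assumption
    have h2 : ({a, a'} : Set _) ⊆ A := by rintro w (rfl | rfl) <;> assumption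
    have hc1 : ({u, v} : Set _).ncard = 2 := Set.ncard_pair huv
    have hc2 : ({a, a'} : Set _).ncard = 2 := Set.ncard_pair haa'
    have hfin1 : ({u, v} : Set _).Finite := (Set.finite_singleton _).insert _
    have hfin2 : ({a, a'} : Set _).Finite := (Set.finite_singleton _).insert _
    have hun : (({u, v} : Set _) ∪ {a, a'}).ncard ≤ 3 := by
      have h := Set.ncard_le_ncard (Set.union_subset h1 h2) hAfin
      rw [cfg.cardA] at h
      exact h
    have hie2 := Set.ncard_union_add_ncard_inter ({u, v} : Set _) {a, a'} hfin1 hfin2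
    have : (({u, v} : Set _) ∩ {a, a'}).ncard ≠ 0 := by omega
    obtain ⟨w, hw1, hw2⟩ := Set.nonempty_of_ncard_ne_zero this
    simp only [Set.mem_insert_iff, Set.mem_singleton_iff] at hw1 hw2
    exact ⟨w, hw1, hw2⟩
  obtain ⟨w, hwuv, hwaa⟩ := hw
  have hwm3 : (w ∩ b3).Nonempty := by
    have : (b3 ∩ w).Nonempty := by
      rcases hwuv with rfl | rfl
      · exact mu
      · exact mv
    obtain ⟨p, hp1, hp2⟩ := this
    exact ⟨p, hp2, hp1⟩
  have hb3mem : b3 ∈ ({b1, b2} : Set _) := by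
    rcases hwaa with rfl | rfl
    · rw [← hMa]; exact ⟨hb3, hwm3⟩
    · rw [← hMa']; exact ⟨hb3, hwm3⟩
  rcases hb3mem with h | h
  · exact hb31 h
  · exact hb32 (by simpa using h)

end Cfg
end Stmt6
def Coplanar4 (L : Fin 4 → Set (Set (Fin 3 → ℝ))) : Prop :=
  ∃ (n : Fin 3 → ℝ) (c : ℝ), n ≠ 0 ∧ ∀ i, ∀ ℓ ∈ L i, ∀ x ∈ ℓ, ∑ t, n t * x t = c

/-- In a 3-consistent, non-coplanar, 4-colored set of lines in ℝ³ with no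
colorful incidence and 3 (pairwise distinct) lines per color: every line of one class
meets exactly two lines of any other class, and any two lines of one class are both met
by exactly one line of any other class. -/
theorem stmt6 (L : Fin 4 → Set (Set (Fin 3 → ℝ)))
    (hline : ∀ i, ∀ ℓ ∈ L i, IsLine ℓ)
    (hcard : ∀ i, (L i).ncard = 3)
    (hdisj : ∀ i j, i ≠ j → Disjoint (L i) (L j))
    (hcons : Consistent3 L)
    (hnocolor : ¬ HasColorfulIncidence L)
    (hnoplane : ¬ Coplanar4 L) :
    ∀ i j, i ≠ j →
      (∀ ℓ ∈ L i, {ℓ' ∈ L j | (ℓ ∩ ℓ').Nonempty}.ncard = 2) ∧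
      (∀ ℓ₁ ∈ L j, ∀ ℓ₂ ∈ L j, ℓ₁ ≠ ℓ₂ →
        ∃! ℓ, ℓ ∈ L i ∧ (ℓ ∩ ℓ₁).Nonempty ∧ (ℓ ∩ ℓ₂).Nonempty) := by
  intro i j hij
  have H : ∀ i j : Fin 4, i ≠ j →
      ∃ k m : Fin 4, i ≠ k ∧ i ≠ m ∧ j ≠ k ∧ j ≠ m ∧ k ≠ m := by decide
  obtain ⟨k, m, hik, him, hjk, hjm, hkm⟩ := H i j hij
  have cov : ∀ x y z w : Fin 4, x ≠ y → x ≠ z → x ≠ w → y ≠ z → y ≠ w → z ≠ w →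
      ∀ t, t = x ∨ t = y ∨ t = z ∨ t = w := by decide
  have tri : ∀ x y z : Fin 4, x ≠ y → x ≠ z → y ≠ z → Stmt6.Tri (L x) (L y) (L z) := by
    intro x y z hxy hxz hyz ℓ hℓ
    have hScard : ({x, y, z} : Finset (Fin 4)).card = 3 := by
      rw [Finset.card_insert_of_notMem (by simp [hxy, hxz]),
          Finset.card_insert_of_notMem (by simp [hyz]), Finset.card_singleton]
    obtain ⟨p, hp, hall⟩ := hcons {x, y, z} hScard x (by simp) ℓ hℓ
    exact ⟨p, hp, hall y (by simp), hall z (by simp)⟩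
  have disj : ∀ x y : Fin 4, x ≠ y → ∀ ℓ, ℓ ∈ L x → ℓ ∈ L y → False :=
    fun x y hxy ℓ h1 h2 => Set.disjoint_left.mp (hdisj x y hxy) h1 h2
  have mkCfg : ∀ x y z w : Fin 4, x ≠ y → x ≠ z → x ≠ w → y ≠ z → y ≠ w → z ≠ w →
      Stmt6.Cfg (L x) (L y) (L z) (L w) := by
    intro x y z w hxy hxz hxw hyz hyw hzw
    have covt := cov x y z w hxy hxz hxw hyz hyw hzw
    refine ⟨hline x, hline y, hline z, hline w, hcard x, hcard y, hcard z, hcard w,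
      disj x y hxy, disj x z hxz, disj x w hxw, disj y z hyz, disj y w hyw, disj z w hzw,
      tri x y z hxy hxz hyz, tri x y w hxy hxw hyw, tri x z w hxz hxw hzw,
      tri y x z hxy.symm hyz hxz, tri y x w hxy.symm hyw hxw, tri y z w hyz hyw hzw,
      tri z x y hxz.symm hyz.symm hxy, tri z x w hxz.symm hzw hxw,
      tri z y w hyz.symm hzw hyw,
      tri w x y hxw.symm hyw.symm hxy, tri w x z hxw.symm hzw.symm hxz,
      tri w y z hyw.symm hzw.symm hyz, ?_, ?_⟩
    · intro p h1 h2 h3 h4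
      apply hnocolor
      refine ⟨p, fun t => ?_⟩
      rcases covt t with rfl | rfl | rfl | rfl
      · exact h1
      · exact h2
      · exact h3
      · exact h4
    · intro n c hn hall
      apply hnoplane
      refine ⟨n, c, hn, fun t ℓ hℓ p hp => ?_⟩
      have hmem : ℓ ∈ L x ∪ L y ∪ L z ∪ L w := by
        rcases covt t with rfl | rfl | rfl | rfl
        · exact Or.inl (Or.inl (Or.inl hℓ))
        · exact Or.inl (Or.inl (Or.inr hℓ))
        · exact Or.inl (Or.inr hℓ)
        · exact Or.inr hℓ
      have he : Stmt6.dp n p = c := hall ℓ hmem hp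
      rw [Fin.sum_univ_three]
      exact he
  have cfg : Stmt6.Cfg (L i) (L j) (L k) (L m) := mkCfg i j k m hij hik him hjk hjm hkm
  constructor
  · intro ℓ hℓ
    exact cfg.ncard_two hℓ
  · intro ℓ₁ h1 ℓ₂ h2 hne12
    exact cfg.exists_unique_common h1 h2 hne12
end

section
/- Let L = L_1 ∪ L_2 ∪ L_3 ∪ L_4 be a 3-consistent colored set of lines in R^3 with no colorful incidence, not contained in a 2-plane, with |L_i| = 3 for each i. Then at most one color class consists of concurrent lines. -/
/-- A color class is concurrent if all its lines pass through a common point. -/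
def ConcurrentClass (C : Set (Set (Fin 3 → ℝ))) : Prop :=
  ∃ p : Fin 3 → ℝ, ∀ ℓ ∈ C, p ∈ ℓ

open Matrix

lemma line_eq_of_mem {ℓ : Set (Fin 3 → ℝ)} (hl : IsLine ℓ) {p q : Fin 3 → ℝ}
    (hp : p ∈ ℓ) (hq : q ∈ ℓ) (hpq : p ≠ q) :
    ℓ = {x | ∃ t : ℝ, x = p + t • (q - p)} := by
  obtain ⟨a, v, hv, rfl⟩ := hl
  obtain ⟨s, rfl⟩ := hp
  obtain ⟨r, rfl⟩ := hq
  have hrs : r - s ≠ 0 := by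
    intro h
    apply hpq
    rw [sub_eq_zero] at h
    rw [h]
  ext x
  constructor
  · rintro ⟨t, rfl⟩
    refine ⟨(t - s) / (r - s), ?_⟩
    have h2 : s + (t - s) / (r - s) * (r - s) = t := by
      rw [div_mul_cancel₀ _ hrs]; ring
    calc a + t • v = a + (s + (t - s) / (r - s) * (r - s)) • v := by rw [h2]
      _ = (a + s • v) + ((t - s) / (r - s)) • ((a + r • v) - (a + s • v)) := by
          match_scalars <;> ring
  · rintro ⟨t, rfl⟩
    refine ⟨s + t * (r - s), ?_⟩
    match_scalars <;> ring

lemma line_unique {ℓ ℓ' : Set (Fin 3 → ℝ)} (hl : IsLine ℓ) (hl' : IsLine ℓ')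
    {p q : Fin 3 → ℝ} (hpq : p ≠ q) (h1 : p ∈ ℓ) (h2 : q ∈ ℓ) (h3 : p ∈ ℓ') (h4 : q ∈ ℓ') :
    ℓ = ℓ' := by
  rw [line_eq_of_mem hl h1 h2 hpq, line_eq_of_mem hl' h3 h4 hpq]

lemma two_points (L : Fin 4 → Set (Set (Fin 3 → ℝ)))
    (hcons : Consistent3 L) (hnocolor : ¬ HasColorfulIncidence L)
    {i j : Fin 4} (hij : i ≠ j) {ℓ : Set (Fin 3 → ℝ)} (hℓ : ℓ ∈ L i) :
    ∃ p q : Fin 3 → ℝ, p ≠ q ∧ p ∈ ℓ ∧ q ∈ ℓ ∧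
      (∃ a ∈ L j, p ∈ a) ∧ (∃ b ∈ L j, q ∈ b) := by
  classical
  have hcard2 : (Finset.univ \ ({i, j} : Finset (Fin 4))).card = 2 := by
    rw [Finset.card_sdiff_of_subset (Finset.subset_univ _)]
    rw [Finset.card_insert_of_notMem (by simp [hij]), Finset.card_singleton]
    simp
  obtain ⟨k, m, hkm, hT⟩ := Finset.card_eq_two.mp hcard2
  have hk : k ∈ Finset.univ \ ({i, j} : Finset (Fin 4)) := by rw [hT]; simp
  have hm : m ∈ Finset.univ \ ({i, j} : Finset (Fin 4)) := by rw [hT]; simp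
  simp only [Finset.mem_sdiff, Finset.mem_insert, Finset.mem_singleton] at hk hm
  have hki : k ≠ i := fun h => hk.2 (Or.inl h)
  have hkj : k ≠ j := fun h => hk.2 (Or.inr h)
  have hmi : m ≠ i := fun h => hm.2 (Or.inl h)
  have hmj : m ≠ j := fun h => hm.2 (Or.inr h)
  have hS1 : ({i, j, k} : Finset (Fin 4)).card = 3 :=
    Finset.card_eq_three.mpr ⟨i, j, k, hij, hki.symm, hkj.symm, rfl⟩
  have hS2 : ({i, j, m} : Finset (Fin 4)).card = 3 :=
    Finset.card_eq_three.mpr ⟨i, j, m, hij, hmi.symm, hmj.symm, rfl⟩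
  obtain ⟨p, hpl, hp⟩ := hcons {i, j, k} hS1 i (by simp) ℓ hℓ
  obtain ⟨q, hql, hq⟩ := hcons {i, j, m} hS2 i (by simp) ℓ hℓ
  refine ⟨p, q, ?_, hpl, hql, hp j (by simp), hq j (by simp)⟩
  intro hpq
  apply hnocolor
  refine ⟨p, fun t => ?_⟩
  by_cases h1 : t ∈ ({i, j, k} : Finset (Fin 4))
  · exact hp t h1
  · simp only [Finset.mem_insert, Finset.mem_singleton, not_or] at h1
    have ht : t ∈ Finset.univ \ ({i, j} : Finset (Fin 4)) := by
      simp [h1.1, h1.2.1]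
    rw [hT] at ht
    simp only [Finset.mem_insert, Finset.mem_singleton] at ht
    have htm : t = m := ht.resolve_left h1.2.2
    subst htm
    rw [hpq]
    exact hq t (by simp)

lemma two_lines (L : Fin 4 → Set (Set (Fin 3 → ℝ)))
    (hline : ∀ i, ∀ ℓ ∈ L i, IsLine ℓ)
    (hdisj : ∀ i j, i ≠ j → Disjoint (L i) (L j))
    (hcons : Consistent3 L) (hnocolor : ¬ HasColorfulIncidence L)
    {i j : Fin 4} (hij : i ≠ j) {ℓ : Set (Fin 3 → ℝ)} (hℓ : ℓ ∈ L i) :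
    ∃ p q a b, p ≠ q ∧ p ∈ ℓ ∧ q ∈ ℓ ∧ a ∈ L j ∧ b ∈ L j ∧ p ∈ a ∧ q ∈ b ∧ a ≠ b := by
  obtain ⟨p, q, hpq, hp, hq, ⟨a, ha, hpa⟩, ⟨b, hb, hqb⟩⟩ := two_points L hcons hnocolor hij hℓ
  refine ⟨p, q, a, b, hpq, hp, hq, ha, hb, hpa, hqb, ?_⟩
  rintro rfl
  have heq := line_unique (hline i ℓ hℓ) (hline j a ha) hpq hp hq hpa hqb
  rw [heq] at hℓ
  exact Set.disjoint_left.mp (hdisj i j hij) hℓ ha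

lemma center_not_mem (L : Fin 4 → Set (Set (Fin 3 → ℝ)))
    (hline : ∀ i, ∀ ℓ ∈ L i, IsLine ℓ)
    (hdisj : ∀ i j, i ≠ j → Disjoint (L i) (L j))
    (hcons : Consistent3 L) (hnocolor : ¬ HasColorfulIncidence L)
    {i j : Fin 4} (hij : i ≠ j) {c : Fin 3 → ℝ} (hc : ∀ ℓ ∈ L j, c ∈ ℓ)
    {ℓ : Set (Fin 3 → ℝ)} (hℓ : ℓ ∈ L i) : c ∉ ℓ := by
  intro hcl
  obtain ⟨p, q, hpq, hp, hq, ⟨a, ha, hpa⟩, ⟨b, hb, hqb⟩⟩ := two_points L hcons hnocolor hij hℓ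
  have key : ∀ r, r ∈ ℓ → ∀ a', a' ∈ L j → r ∈ a' → r ≠ c → False := by
    intro r hr a' ha' hra hrc
    have heq := line_unique (hline i ℓ hℓ) (hline j a' ha') hrc hr hcl hra (hc a' ha')
    rw [heq] at hℓ
    exact Set.disjoint_left.mp (hdisj i j hij) hℓ ha'
  rcases ne_or_eq p c with h | h
  · exact key p hp a ha hpa h
  · exact key q hq b hb hqb (fun h' => hpq (h.trans h'.symm))

/-- In a 3-consistent, non-coplanar, 4-colored set of lines in ℝ³ with no
colorful incidence and 3 lines per color, at most one color class is concurrent. -/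
theorem stmt7 (L : Fin 4 → Set (Set (Fin 3 → ℝ)))
    (hline : ∀ i, ∀ ℓ ∈ L i, IsLine ℓ)
    (hcard : ∀ i, (L i).ncard = 3)
    (hdisj : ∀ i j, i ≠ j → Disjoint (L i) (L j))
    (hcons : Consistent3 L)
    (hnocolor : ¬ HasColorfulIncidence L)
    (hnoplane : ¬ Coplanar4 L) :
    ∀ i j, ConcurrentClass (L i) → ConcurrentClass (L j) → i = j := by
  rintro i j ⟨ci, hci⟩ ⟨cj, hcj⟩
  by_contra hij
  have hL3i : ∀ ℓ ∈ L i, cj ∉ ℓ := fun ℓ hℓ =>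
    center_not_mem L hline hdisj hcons hnocolor hij hcj hℓ
  have hL3j : ∀ ℓ ∈ L j, ci ∉ ℓ := fun ℓ hℓ =>
    center_not_mem L hline hdisj hcons hnocolor (Ne.symm hij) hci hℓ
  obtain ⟨ℓ1, hℓ1⟩ := Set.nonempty_of_ncard_ne_zero
    (show (L i).ncard ≠ 0 by rw [hcard i]; norm_num)
  obtain ⟨p1, p2, a, b, hp12, hp1, hp2, ha, hb, hp1a, hp2b, hab⟩ :=
    two_lines L hline hdisj hcons hnocolor hij hℓ1
  have hcja : cj ∈ a := hcj a ha
  have hcjb : cj ∈ b := hcj b hb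
  have hp1cj : p1 ≠ cj := fun h => hL3i ℓ1 hℓ1 (h ▸ hp1)
  have hp2cj : p2 ≠ cj := fun h => hL3i ℓ1 hℓ1 (h ▸ hp2)
  have hau : a = {x | ∃ t : ℝ, x = cj + t • (p1 - cj)} :=
    line_eq_of_mem (hline j a ha) hcja hp1a (Ne.symm hp1cj)
  have hbw : b = {x | ∃ t : ℝ, x = cj + t • (p2 - cj)} :=
    line_eq_of_mem (hline j b hb) hcjb hp2b (Ne.symm hp2cj)
  set W : Submodule ℝ (Fin 3 → ℝ) :=
    Submodule.span ℝ ({p1 - cj, p2 - cj} : Set (Fin 3 → ℝ)) with hW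
  have haW : ∀ x ∈ a, x - cj ∈ W := by
    intro x hx
    rw [hau] at hx
    obtain ⟨t, rfl⟩ := hx
    exact Submodule.mem_span_pair.mpr ⟨t, 0, by module⟩
  have hbW : ∀ x ∈ b, x - cj ∈ W := by
    intro x hx
    rw [hbw] at hx
    obtain ⟨t, rfl⟩ := hx
    exact Submodule.mem_span_pair.mpr ⟨0, t, by module⟩
  have hciW : ci - cj ∈ W := by
    have hmem : ci ∈ ℓ1 := hci ℓ1 hℓ1
    rw [line_eq_of_mem (hline i ℓ1 hℓ1) hp1 hp2 hp12] at hmem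
    obtain ⟨t, ht⟩ := hmem
    exact Submodule.mem_span_pair.mpr ⟨1 - t, t, by rw [ht]; module⟩
  by_cases hcase : ∀ c ∈ L j, ∀ x ∈ c, x - cj ∈ W
  · -- all lines of L j lie in the plane cj + W ⇒ everything coplanar
    apply hnoplane
    have hall : ∀ t, ∀ ℓ ∈ L t, ∀ x ∈ ℓ, x - cj ∈ W := by
      intro t ℓ hℓ x hx
      by_cases htj : t = j
      · subst htj; exact hcase ℓ hℓ x hx
      · obtain ⟨p, q, hpq, hp, hq, ⟨d, hd, hpd⟩, ⟨e, he, hqe⟩⟩ :=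
          two_points L hcons hnocolor htj hℓ
        have hpW := hcase d hd p hpd
        have hqW := hcase e he q hqe
        rw [line_eq_of_mem (hline t ℓ hℓ) hp hq hpq] at hx
        obtain ⟨s, rfl⟩ := hx
        have hsub : (p + s • (q - p)) - cj = (1 - s) • (p - cj) + s • (q - cj) := by
          module
        rw [hsub]
        exact W.add_mem (W.smul_mem _ hpW) (W.smul_mem _ hqW)
    have hind : LinearIndependent ℝ ![p1 - cj, p2 - cj] := by
      rw [linearIndependent_fin2]
      simp only [Matrix.cons_val_one, Matrix.head_cons, Matrix.cons_val_zero]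
      refine ⟨sub_ne_zero.mpr hp2cj, fun r hr => ?_⟩
      apply hab
      have hp1b : p1 ∈ b := by
        rw [hbw]
        exact ⟨r, by rw [hr]; module⟩
      exact line_unique (hline j a ha) (hline j b hb) (Ne.symm hp1cj) hcja hp1a hcjb hp1b
    refine ⟨crossProduct (p1 - cj) (p2 - cj), crossProduct (p1 - cj) (p2 - cj) ⬝ᵥ cj,
      crossProduct_ne_zero_iff_linearIndependent.mpr hind, ?_⟩
    intro t ℓ hℓ x hx
    obtain ⟨s1, s2, hs⟩ := Submodule.mem_span_pair.mp (hall t ℓ hℓ x hx)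
    have hdot : crossProduct (p1 - cj) (p2 - cj) ⬝ᵥ (x - cj) = 0 := by
      rw [← hs, dotProduct_add, dotProduct_smul, dotProduct_smul,
        dotProduct_comm _ (p1 - cj), dotProduct_comm _ (p2 - cj),
        dot_self_cross, dot_cross_self]
      simp
    have hrfl : (∑ t, crossProduct (p1 - cj) (p2 - cj) t * x t)
        = crossProduct (p1 - cj) (p2 - cj) ⬝ᵥ x := rfl
    rw [hrfl]
    rw [dotProduct_sub] at hdot
    linarith
  · push_neg at hcase
    obtain ⟨c, hc, x0, hx0c, hx0W⟩ := hcase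
    have hx0cj : x0 ≠ cj := by
      rintro rfl
      exact hx0W (by rw [sub_self]; exact W.zero_mem)
    have hcz : c = {x | ∃ t : ℝ, x = cj + t • (x0 - cj)} :=
      line_eq_of_mem (hline j c hc) (hcj c hc) hx0c (Ne.symm hx0cj)
    obtain ⟨q1, q2, ℓ', ℓ'', hq12, hq1c, hq2c, hℓ', hℓ'', hq1ℓ', hq2ℓ'', _⟩ :=
      two_lines L hline hdisj hcons hnocolor (Ne.symm hij) hc
    have hq1cj : q1 ≠ cj := fun h => hL3i ℓ' hℓ' (h ▸ hq1ℓ')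
    have hq1c' := hq1c
    rw [hcz] at hq1c'
    obtain ⟨t1, ht1⟩ := hq1c'
    have ht1ne : t1 ≠ 0 := by
      rintro rfl
      apply hq1cj
      simpa using ht1
    have hca : c ≠ a := by rintro rfl; exact hx0W (haW x0 hx0c)
    have hcb : c ≠ b := by rintro rfl; exact hx0W (hbW x0 hx0c)
    have habc : ({a, b, c} : Set (Set (Fin 3 → ℝ))).ncard = 3 :=
      Set.ncard_eq_three.mpr ⟨a, b, c, hab, hca.symm, hcb.symm, rfl⟩
    have hsub : ({a, b, c} : Set (Set (Fin 3 → ℝ))) ⊆ L j := by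
      intro y hy
      simp only [Set.mem_insert_iff, Set.mem_singleton_iff] at hy
      rcases hy with rfl | rfl | rfl
      · exact ha
      · exact hb
      · exact hc
    have hLj : ({a, b, c} : Set (Set (Fin 3 → ℝ))) = L j :=
      Set.eq_of_subset_of_ncard_le hsub (by rw [hcard j, habc])
        (Set.finite_of_ncard_ne_zero (by rw [hcard j]; norm_num))
    obtain ⟨r1, r2, d, e, hr12, hr1, hr2, hd, he, hr1d, hr2e, hde⟩ :=
      two_lines L hline hdisj hcons hnocolor hij hℓ'
    rw [← hLj] at hd he
    simp only [Set.mem_insert_iff, Set.mem_singleton_iff] at hd he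
    have key : ∃ r' f, r' ∈ ℓ' ∧ f ∈ L j ∧ r' ∈ f ∧ r' - cj ∈ W := by
      rcases hd with h | h | h
      · exact ⟨r1, a, hr1, ha, h ▸ hr1d, haW r1 (h ▸ hr1d)⟩
      · exact ⟨r1, b, hr1, hb, h ▸ hr1d, hbW r1 (h ▸ hr1d)⟩
      · rcases he with h' | h' | h'
        · exact ⟨r2, a, hr2, ha, h' ▸ hr2e, haW r2 (h' ▸ hr2e)⟩
        · exact ⟨r2, b, hr2, hb, h' ▸ hr2e, hbW r2 (h' ▸ hr2e)⟩
        · exact absurd (h.trans h'.symm) hde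
    obtain ⟨r', f, hr'ℓ, hf, hr'f, hr'W⟩ := key
    by_cases hqr : q1 = r'
    · apply hx0W
      have hz : x0 - cj = t1⁻¹ • (q1 - cj) := by
        rw [ht1, add_sub_cancel_left, smul_smul, inv_mul_cancel₀ ht1ne, one_smul]
      rw [hz, hqr]
      exact W.smul_mem _ hr'W
    · have hℓ'eq := line_eq_of_mem (hline i ℓ' hℓ') hr'ℓ hq1ℓ' (Ne.symm hqr)
      have hciℓ' : ci ∈ ℓ' := hci ℓ' hℓ'
      rw [hℓ'eq] at hciℓ'
      obtain ⟨s, hs⟩ := hciℓ'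
      by_cases hs0 : s = 0
      · subst hs0
        have hcir : ci = r' := by simpa using hs
        rw [← hcir] at hr'f
        exact hL3j f hf hr'f
      · apply hx0W
        have hkey : (s * t1) • (x0 - cj) = (ci - cj) - (1 - s) • (r' - cj) := by
          rw [hs, ht1]; module
        have hmem : (s * t1) • (x0 - cj) ∈ W := by
          rw [hkey]
          exact W.sub_mem hciW (W.smul_mem _ hr'W)
        have hzz : x0 - cj = (s * t1)⁻¹ • ((s * t1) • (x0 - cj)) := by
          rw [smul_smul, inv_mul_cancel₀ (mul_ne_zero hs0 ht1ne), one_smul]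
        rw [hzz]
        exact W.smul_mem _ hmem
end
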